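/- arXiv:2404.13822 — 2 statements merged into one kernel-verified Lean document; each statement's English description precedes it below -/
import Mathlib

section
/- Let W be a graphon with t(K₂,W)⁴ ≠ t(C₄,W), where K₂ is the single edge and C₄ is the 4-cycle. Let G_n = G(n,W), f̂(G_n) := t̂(K₂,G_n)⁴ − t̂(C₄,G_n), and T_n := n^{3/2}·f̂(G_n) / (4√2·t̂(K₂,G_n)³·(1 − t̂(K₂,G_n))). Then for every c > 0, P(|T_n| > c) → 1 as n → ∞. -/
open MeasureTheory
open scoped Classical

/-- Lebesgue measure restricted to `[0,1]`; a probability measure. -/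
noncomputable def mu01 : Measure ℝ := volume.restrict (Set.Icc 0 1)

instance : IsProbabilityMeasure mu01 := by
  unfold mu01
  constructor
  rw [Measure.restrict_apply_univ, Real.volume_Icc]
  norm_num

/-- Product of `k` copies of `mu01`: the joint law of `k` i.i.d. uniforms on `[0,1]`. -/
noncomputable def pimeas (k : ℕ) : Measure (Fin k → ℝ) := Measure.pi fun _ => mu01

/-- A graphon: a symmetric measurable function with values in `[0,1]`. -/
def IsGraphon (W : ℝ → ℝ → ℝ) : Prop :=
  Measurable (Function.uncurry W) ∧ (∀ x y, W x y = W y x) ∧ ∀ x y, W x y ∈ Set.Icc (0 : ℝ) 1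

/-- Product of `W (x a) (x b)` over the (unordered) pairs `a < b` related by `R`. -/
noncomputable def pairProd {m : ℕ} (R : Fin m → Fin m → Prop) (W : ℝ → ℝ → ℝ)
    (x : Fin m → ℝ) : ℝ :=
  ∏ p : Fin m × Fin m, if p.1 < p.2 ∧ R p.1 p.2 then W (x p.1) (x p.2) else 1

/-- Homomorphism density `t(H,W)`. -/
noncomputable def homDensity {k : ℕ} (H : SimpleGraph (Fin k)) (W : ℝ → ℝ → ℝ) : ℝ :=
  ∫ x, pairProd H.Adj W x ∂(pimeas k)

/-- 1-point conditional homomorphism density `t_a(x,H,W)`. -/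
noncomputable def homDensity1 {k : ℕ} (H : SimpleGraph (Fin k)) (W : ℝ → ℝ → ℝ)
    (a : Fin k) (t : ℝ) : ℝ :=
  ∫ x, pairProd H.Adj W (Function.update x a t) ∂(pimeas k)

/-- 2-point conditional homomorphism density `t_{a,b}(x,y,H,W)`. -/
noncomputable def homDensity2 {k : ℕ} (H : SimpleGraph (Fin k)) (W : ℝ → ℝ → ℝ)
    (a b : Fin k) (s t : ℝ) : ℝ :=
  ∫ x, pairProd H.Adj W (Function.update (Function.update x a s) b t) ∂(pimeas k)

/-- `W` is `H`-regular: the average 1-point conditional density is a.e. `t(H,W)`. -/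
def IsHRegular {k : ℕ} (H : SimpleGraph (Fin k)) (W : ℝ → ℝ → ℝ) : Prop :=
  ∀ᵐ t ∂mu01, (∑ a : Fin k, homDensity1 H W a t) / (k : ℝ) = homDensity H W

/-- The number of automorphisms of `H`. -/
noncomputable def autCard {k : ℕ} (H : SimpleGraph (Fin k)) : ℕ :=
  (Finset.univ.filter fun σ : Equiv.Perm (Fin k) =>
    ∀ u v, H.Adj (σ u) (σ v) ↔ H.Adj u v).card

/-- Number of injective homomorphisms from `H` into `G`; equals `|Aut(H)| · X(H,G)`. -/
noncomputable def injHomCount {k n : ℕ} (H : SimpleGraph (Fin k)) (G : SimpleGraph (Fin n)) : ℕ :=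
  (Finset.univ.filter fun φ : Fin k → Fin n =>
    Function.Injective φ ∧ ∀ u v, H.Adj u v → G.Adj (φ u) (φ v)).card

/-- The number of copies of `H` in `G`: `X(H,G) = injHomCount H G / |Aut(H)|`. -/
noncomputable def subCount {k n : ℕ} (H : SimpleGraph (Fin k)) (G : SimpleGraph (Fin n)) : ℝ :=
  (injHomCount H G : ℝ) / (autCard H : ℝ)

/-- Empirical homomorphism density `t̂(H,G) = |Aut(H)| · X(H,G) / (n)_k`. -/
noncomputable def empDensity {k n : ℕ} (H : SimpleGraph (Fin k)) (G : SimpleGraph (Fin n)) : ℝ :=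
  (injHomCount H G : ℝ) / (n.descFactorial k : ℝ)

/-- Sample space for the `W`-random graph on `n` vertices: uniform vertex labels and
uniform edge labels. -/
abbrev GraphonSpace (n : ℕ) := (Fin n → ℝ) × (Fin n → Fin n → ℝ)

/-- The joint law of the i.i.d. uniform vertex and edge labels. -/
noncomputable def graphonMeasure (n : ℕ) : Measure (GraphonSpace n) :=
  (Measure.pi fun _ : Fin n => mu01).prod
    (Measure.pi fun _ : Fin n => Measure.pi fun _ : Fin n => mu01)

/-- The `W`-random graph `G(n, W)` built from the labels `ω`: vertices `i ≠ j` are adjacent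
iff `Y_{ij} ≤ W (U_i) (U_j)`. -/
def wGraph {n : ℕ} (W : ℝ → ℝ → ℝ) (ω : GraphonSpace n) : SimpleGraph (Fin n) where
  Adj i j := i ≠ j ∧ ω.2 (min i j) (max i j) ≤ W (ω.1 (min i j)) (ω.1 (max i j))
  symm := by
    constructor
    rintro i j ⟨hne, hle⟩
    refine ⟨hne.symm, ?_⟩
    rwa [min_comm j i, max_comm j i]
  loopless := ⟨fun i h => h.1 rfl⟩

/-- Image of the adjacency relation of `H` under a map `f` of vertex sets. -/
def mappedAdj {k m : ℕ} (H : SimpleGraph (Fin k)) (f : Fin k → Fin m) (x y : Fin m) : Prop :=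
  ∃ u v, H.Adj u v ∧ f u = x ∧ f v = y

/-- Inclusion of the second vertex set into `Fin (k₁ + k₂)`, redirecting the vertex `b`
to the vertex `a` of the first vertex set. -/
def vRedirect {k₁ k₂ : ℕ} (a : Fin k₁) (b : Fin k₂) : Fin k₂ → Fin (k₁ + k₂) :=
  fun v => if v = b then Fin.castAdd k₂ a else Fin.natAdd k₁ v

/-- The vertex join `H₁ ⊕_{a,b} H₂`, realized on `Fin (k₁ + k₂)` with one extra isolated
vertex (which changes neither homomorphism densities nor, for large host graphs, the
normalized injective homomorphism counts). -/
def vertexJoinGraph {k₁ k₂ : ℕ} (H₁ : SimpleGraph (Fin k₁)) (H₂ : SimpleGraph (Fin k₂))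
    (a : Fin k₁) (b : Fin k₂) : SimpleGraph (Fin (k₁ + k₂)) where
  Adj x y := x ≠ y ∧ (mappedAdj H₁ (Fin.castAdd k₂) x y ∨ mappedAdj H₂ (vRedirect a b) x y)
  symm := by
    constructor
    rintro x y ⟨hxy, h⟩
    refine ⟨hxy.symm, ?_⟩
    rcases h with ⟨u, v, huv, hu, hv⟩ | ⟨u, v, huv, hu, hv⟩
    · exact Or.inl ⟨v, u, huv.symm, hv, hu⟩
    · exact Or.inr ⟨v, u, huv.symm, hv, hu⟩
  loopless := ⟨fun x h => h.1 rfl⟩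

/-- The centered Gaussian law on `ℝ` with variance `v` (the Dirac mass at `0` if `v ≤ 0`). -/
noncomputable def gaussianLimit (v : ℝ) : Measure ℝ :=
  ProbabilityTheory.gaussianReal 0 v.toNNReal

/-- Convergence in distribution (weak convergence of laws) of real statistics of the
`W`-random graphs towards the law `ν`. -/
def TendstoInDist (X : (n : ℕ) → GraphonSpace n → ℝ) (ν : Measure ℝ) : Prop :=
  ∀ f : BoundedContinuousFunction ℝ ℝ,
    Filter.Tendsto (fun n => ∫ ω, f (X n ω) ∂(graphonMeasure n))
      Filter.atTop (nhds (∫ x, f x ∂ν))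

/-- The single edge `K₂`. -/
def edge2 : SimpleGraph (Fin 2) := ⊤

/-- The 4-cycle `C₄`. -/
def cycle4 : SimpleGraph (Fin 4) where
  Adj i j := j = i + 1 ∨ i = j + 1
  symm := ⟨fun _ _ h => h.symm⟩
  loopless := by
    constructor
    intro i
    fin_cases i <;> decide


/-! ### Auxiliary machinery -/

noncomputable def piU (ι : Type*) [Fintype ι] : Measure (ι → ℝ) := Measure.pi fun _ => mu01

instance (ι : Type*) [Fintype ι] : IsProbabilityMeasure (piU ι) := by
  unfold piU; infer_instance

instance (k : ℕ) : IsProbabilityMeasure (pimeas k) := by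
  unfold pimeas; infer_instance

instance (n : ℕ) : IsProbabilityMeasure (graphonMeasure n) := by
  unfold graphonMeasure; infer_instance

lemma pimeas_eq (k : ℕ) : pimeas k = piU (Fin k) := rfl

lemma measurable_precomp {ι κ : Type*} [Fintype ι] [Fintype κ] (φ : ι → κ) :
    Measurable (fun x : κ → ℝ => x ∘ φ) :=
  measurable_pi_lambda _ fun i => measurable_pi_apply (φ i)

lemma map_pi_precomp {ι κ : Type*} [Fintype ι] [Fintype κ] (φ : ι → κ)
    (hφ : Function.Injective φ) :
    (piU κ).map (fun x => x ∘ φ) = piU ι := by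
  refine (Measure.pi_eq fun s hs => ?_).symm
  rw [Measure.map_apply (measurable_precomp φ) (MeasurableSet.univ_pi hs)]
  have hpre : (fun x : κ → ℝ => x ∘ φ) ⁻¹' Set.univ.pi s =
      Set.univ.pi (fun j => if h : ∃ i, φ i = j then s h.choose else Set.univ) := by
    ext x
    simp only [Set.mem_preimage, Set.mem_pi, Set.mem_univ, forall_true_left, Function.comp]
    constructor
    · intro hx j
      by_cases h : ∃ i, φ i = j
      · simp only [h, dif_pos]
        have hx' := hx h.choose
        rw [h.choose_spec] at hx'
        exact hx'
      · simp [h]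
    · intro hx i
      have h : ∃ i', φ i' = φ i := ⟨i, rfl⟩
      have := hx (φ i)
      simp only [h, dif_pos] at this
      have he : h.choose = i := hφ h.choose_spec
      rwa [he] at this
  rw [hpre, piU, Measure.pi_pi]
  have h1 : ∀ j ∈ Finset.univ, j ∉ Finset.image φ Finset.univ →
      mu01 (if h : ∃ i, φ i = j then s h.choose else Set.univ) = 1 := by
    intro j _ hj
    have : ¬ ∃ i, φ i = j := by
      intro ⟨i, hi⟩; exact hj (Finset.mem_image.2 ⟨i, Finset.mem_univ i, hi⟩)
    simp [this]
  rw [← Finset.prod_subset (Finset.subset_univ (Finset.image φ Finset.univ)) h1,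
    Finset.prod_image (fun a _ b _ h => hφ h)]
  refine Finset.prod_congr rfl fun i _ => ?_
  have h : ∃ i', φ i' = φ i := ⟨i, rfl⟩
  simp only [h, dif_pos]
  congr 1
  exact congrArg s (hφ h.choose_spec)

lemma integral_precomp_inj {ι κ : Type*} [Fintype ι] [Fintype κ] (φ : ι → κ)
    (hφ : Function.Injective φ) {F : (ι → ℝ) → ℝ} (hF : Measurable F) :
    ∫ x, F (x ∘ φ) ∂(piU κ) = ∫ y, F y ∂(piU ι) := by
  rw [← map_pi_precomp φ hφ, integral_map (measurable_precomp φ).aemeasurable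
    hF.aestronglyMeasurable]

noncomputable def ePairs {m : ℕ} (R : Fin m → Fin m → Prop) : Finset (Fin m × Fin m) :=
  Finset.univ.filter fun p : Fin m × Fin m => p.1 < p.2 ∧ R p.1 p.2

lemma pairProd_eq_prod {m : ℕ} (R : Fin m → Fin m → Prop) (W : ℝ → ℝ → ℝ) (x : Fin m → ℝ) :
    pairProd R W x = ∏ p ∈ ePairs R, W (x p.1) (x p.2) := by
  rw [pairProd, ePairs, Finset.prod_filter]

section
variable {W : ℝ → ℝ → ℝ} (hW : IsGraphon W)
include hW

lemma measurable_pairProd {m : ℕ} (R : Fin m → Fin m → Prop) :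
    Measurable fun x : Fin m → ℝ => pairProd R W x := by
  unfold pairProd
  refine Finset.measurable_prod _ fun p _ => ?_
  by_cases h : p.1 < p.2 ∧ R p.1 p.2
  · simp only [h, if_true]
    have : Measurable fun x : Fin m → ℝ => Function.uncurry W (x p.1, x p.2) :=
      hW.1.comp ((measurable_pi_apply p.1).prodMk (measurable_pi_apply p.2))
    exact this
  · simp [h]

lemma pairProd_nonneg {m : ℕ} (R : Fin m → Fin m → Prop) (x : Fin m → ℝ) :
    0 ≤ pairProd R W x := by
  refine Finset.prod_nonneg fun p _ => ?_
  split
  · exact (hW.2.2 _ _).1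
  · norm_num

lemma pairProd_le_one {m : ℕ} (R : Fin m → Fin m → Prop) (x : Fin m → ℝ) :
    pairProd R W x ≤ 1 := by
  refine Finset.prod_le_one (fun p _ => ?_) (fun p _ => ?_) <;> split
  · exact (hW.2.2 _ _).1
  · norm_num
  · exact (hW.2.2 _ _).2
  · norm_num

lemma pairProd_le_factor {m : ℕ} (R : Fin m → Fin m → Prop) (x : Fin m → ℝ)
    {p : Fin m × Fin m} (hp : p ∈ ePairs R) :
    pairProd R W x ≤ W (x p.1) (x p.2) := by
  rw [pairProd_eq_prod]
  rw [← Finset.mul_prod_erase _ _ hp]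
  have h1 : ∏ q ∈ (ePairs R).erase p, W (x q.1) (x q.2) ≤ 1 :=
    Finset.prod_le_one (fun q _ => (hW.2.2 _ _).1) (fun q _ => (hW.2.2 _ _).2)
  nlinarith [(hW.2.2 (x p.1) (x p.2)).1,
    Finset.prod_nonneg (fun q (_ : q ∈ (ePairs R).erase p) => (hW.2.2 (x q.1) (x q.2)).1)]

lemma one_sub_pairProd_le {m : ℕ} (R : Fin m → Fin m → Prop) (x : Fin m → ℝ) :
    1 - pairProd R W x ≤ ∑ p ∈ ePairs R, (1 - W (x p.1) (x p.2)) := by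
  rw [pairProd_eq_prod]
  induction (ePairs R) using Finset.cons_induction with
  | empty => simp
  | cons a s ha ih =>
    rw [Finset.prod_cons, Finset.sum_cons]
    have h1 : W (x a.1) (x a.2) ≤ 1 := (hW.2.2 _ _).2
    have hp0 : (0:ℝ) ≤ ∏ q ∈ s, W (x q.1) (x q.2) :=
      Finset.prod_nonneg fun q _ => (hW.2.2 _ _).1
    have hp1 : ∏ q ∈ s, W (x q.1) (x q.2) ≤ 1 :=
      Finset.prod_le_one (fun q _ => (hW.2.2 _ _).1) (fun q _ => (hW.2.2 _ _).2)
    nlinarith [ih]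

end

lemma mu01_Iic {w : ℝ} (h0 : 0 ≤ w) (h1 : w ≤ 1) :
    mu01 (Set.Iic w) = ENNReal.ofReal w := by
  unfold mu01
  rw [Measure.restrict_apply measurableSet_Iic]
  have : Set.Iic w ∩ Set.Icc (0:ℝ) 1 = Set.Icc 0 w := by
    ext t
    simp only [Set.mem_inter_iff, Set.mem_Iic, Set.mem_Icc]
    constructor
    · rintro ⟨a, b, c⟩; exact ⟨b, a⟩
    · rintro ⟨a, b⟩; exact ⟨b, a, b.trans h1⟩
  rw [this, Real.volume_Icc]; norm_num

lemma minmax_cases {α : Type*} [LinearOrder α] (x y z w : α)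
    (h : (min x y, max x y) = (min z w, max z w)) :
    (x = z ∧ y = w) ∨ (x = w ∧ y = z) := by
  rw [Prod.mk.injEq] at h
  rcases le_total x y with hxy | hxy <;> rcases le_total z w with hzw | hzw <;>
    simp only [min_eq_left, min_eq_right, max_eq_right, max_eq_left, hxy, hzw] at h <;>
    tauto

section EventB
variable {W : ℝ → ℝ → ℝ}

def eventB {n : ℕ} (W : ℝ → ℝ → ℝ) (E : Finset (Fin n × Fin n)) : Set (GraphonSpace n) :=
  {ω | ∀ p ∈ E, ω.2 p.1 p.2 ≤ W (ω.1 p.1) (ω.1 p.2)}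

lemma measurableSet_eventB (hW : IsGraphon W) {n : ℕ} (E : Finset (Fin n × Fin n)) :
    MeasurableSet (eventB W E) := by
  have he : eventB W E =
      ⋂ p ∈ E, {ω : GraphonSpace n | ω.2 p.1 p.2 ≤ W (ω.1 p.1) (ω.1 p.2)} := by
    ext ω; simp [eventB]
  rw [he]
  refine MeasurableSet.biInter E.countable_toSet fun p _ => ?_
  have h1 : Measurable fun ω : GraphonSpace n => ω.2 p.1 p.2 :=
    (measurable_pi_apply p.2).comp ((measurable_pi_apply p.1).comp measurable_snd)
  have h2 : Measurable fun ω : GraphonSpace n => Function.uncurry W (ω.1 p.1, ω.1 p.2) :=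
    hW.1.comp (((measurable_pi_apply p.1).comp measurable_fst).prodMk
      ((measurable_pi_apply p.2).comp measurable_fst))
  exact measurableSet_le h1 h2

lemma measurable_prodW (hW : IsGraphon W) {n : ℕ} (E : Finset (Fin n × Fin n)) :
    Measurable fun u : Fin n → ℝ => ∏ p ∈ E, W (u p.1) (u p.2) := by
  refine Finset.measurable_prod _ fun p _ => ?_
  have : Measurable fun u : Fin n → ℝ => Function.uncurry W (u p.1, u p.2) :=
    hW.1.comp ((measurable_pi_apply p.1).prodMk (measurable_pi_apply p.2))
  exact this

/-- The fundamental computation: probability that all required edge labels are below the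
graphon values. -/
lemma prob_eventB (hW : IsGraphon W) {n : ℕ} (E : Finset (Fin n × Fin n)) :
    graphonMeasure n (eventB W E)
      = ENNReal.ofReal (∫ u, ∏ p ∈ E, W (u p.1) (u p.2) ∂(pimeas n)) := by
  have hg : Measurable fun u : Fin n → ℝ => ∏ p ∈ E, W (u p.1) (u p.2) :=
    measurable_prodW hW E
  have hg0 : ∀ u : Fin n → ℝ, 0 ≤ ∏ p ∈ E, W (u p.1) (u p.2) :=
    fun u => Finset.prod_nonneg fun p _ => (hW.2.2 _ _).1
  have hg1 : ∀ u : Fin n → ℝ, ∏ p ∈ E, W (u p.1) (u p.2) ≤ 1 :=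
    fun u => Finset.prod_le_one (fun p _ => (hW.2.2 _ _).1) (fun p _ => (hW.2.2 _ _).2)
  have step1 : graphonMeasure n (eventB W E)
      = ∫⁻ u, ENNReal.ofReal (∏ p ∈ E, W (u p.1) (u p.2)) ∂(pimeas n) := by
    rw [graphonMeasure, Measure.prod_apply (measurableSet_eventB hW E)]
    refine lintegral_congr fun u => ?_
    have hslice : (Prod.mk u ⁻¹' eventB W E) =
        Set.univ.pi (fun a => Set.univ.pi fun b =>
          if (a, b) ∈ E then Set.Iic (W (u a) (u b)) else Set.univ) := by
      ext Y
      simp only [Set.mem_preimage, eventB, Set.mem_setOf_eq, Set.mem_pi, Set.mem_univ,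
        forall_true_left]
      constructor
      · intro h a b
        by_cases hab : (a, b) ∈ E
        · simp only [hab, if_true, Set.mem_Iic]
          exact h (a, b) hab
        · simp [hab]
      · intro h p hp
        have := h p.1 p.2
        simp only [Prod.mk.eta, hp, if_true, Set.mem_Iic] at this
        exact this
    rw [hslice, Measure.pi_pi]
    have hrow : ∀ a, (Measure.pi fun _ : Fin n => mu01)
        (Set.univ.pi fun b => if (a, b) ∈ E then Set.Iic (W (u a) (u b)) else Set.univ)
        = ∏ b, (if (a, b) ∈ E then ENNReal.ofReal (W (u a) (u b)) else 1) := by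
      intro a
      rw [Measure.pi_pi]
      refine Finset.prod_congr rfl fun b _ => ?_
      by_cases hab : (a, b) ∈ E
      · simp only [hab, if_true]
        exact mu01_Iic (hW.2.2 _ _).1 (hW.2.2 _ _).2
      · simp [hab]
    simp_rw [hrow]
    rw [← Fintype.prod_prod_type
      (fun p : Fin n × Fin n => if p ∈ E then ENNReal.ofReal (W (u p.1) (u p.2)) else 1)]
    rw [Finset.prod_ite_mem Finset.univ E
      (fun p : Fin n × Fin n => ENNReal.ofReal (W (u p.1) (u p.2))), Finset.univ_inter]
    rw [← ENNReal.ofReal_prod_of_nonneg fun p _ => (hW.2.2 _ _).1]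
  rw [step1]
  rw [integral_eq_lintegral_of_nonneg_ae (Filter.Eventually.of_forall hg0)
    hg.aestronglyMeasurable]
  rw [ENNReal.ofReal_toReal]
  refine ne_of_lt (lt_of_le_of_lt (le_trans (lintegral_mono fun u => ?_)
    (le_of_eq (lintegral_const 1))) ?_)
  · exact ENNReal.ofReal_le_of_le_toReal (by simpa using hg1 u)
  · simp

end EventB

section EFin
variable {W : ℝ → ℝ → ℝ} {k n : ℕ}

noncomputable def eFin (H : SimpleGraph (Fin k)) (φ : Fin k → Fin n) :
    Finset (Fin n × Fin n) :=
  (ePairs H.Adj).image fun p => (min (φ p.1) (φ p.2), max (φ p.1) (φ p.2))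

lemma homEvent_eq (H : SimpleGraph (Fin k)) (φ : Fin k → Fin n)
    (hφ : Function.Injective φ) :
    {ω : GraphonSpace n | ∀ u v, H.Adj u v → (wGraph W ω).Adj (φ u) (φ v)}
      = eventB W (eFin H φ) := by
  ext ω
  simp only [Set.mem_setOf_eq, eventB]
  constructor
  · intro h q hq
    obtain ⟨p, hp, rfl⟩ := Finset.mem_image.1 hq
    obtain ⟨-, hlt, hadj⟩ := Finset.mem_filter.1 hp
    exact (h p.1 p.2 hadj).2
  · intro h u v huv
    refine ⟨fun he => huv.ne (hφ he), ?_⟩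
    rcases lt_or_gt_of_ne huv.ne with hlt | hlt
    · have hp : (u, v) ∈ ePairs H.Adj := Finset.mem_filter.2 ⟨Finset.mem_univ _, hlt, huv⟩
      exact h _ (Finset.mem_image.2 ⟨(u, v), hp, rfl⟩)
    · have hp : (v, u) ∈ ePairs H.Adj := Finset.mem_filter.2 ⟨Finset.mem_univ _, hlt, huv.symm⟩
      have := h _ (Finset.mem_image.2 ⟨(v, u), hp, rfl⟩)
      simpa [min_comm (φ v) (φ u), max_comm (φ v) (φ u)] using this

lemma prod_eFin (hW : IsGraphon W) (H : SimpleGraph (Fin k)) (φ : Fin k → Fin n)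
    (hφ : Function.Injective φ) (u : Fin n → ℝ) :
    ∏ q ∈ eFin H φ, W (u q.1) (u q.2) = pairProd H.Adj W (u ∘ φ) := by
  rw [pairProd_eq_prod, eFin, Finset.prod_image]
  · refine Finset.prod_congr rfl fun p _ => ?_
    rcases le_total (φ p.1) (φ p.2) with hle | hle
    · rw [min_eq_left hle, max_eq_right hle]; rfl
    · rw [min_eq_right hle, max_eq_left hle]
      exact hW.2.1 _ _
  · intro p hp q hq h
    obtain ⟨-, hp1, -⟩ := Finset.mem_filter.1 hp
    obtain ⟨-, hq1, -⟩ := Finset.mem_filter.1 hq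
    rcases minmax_cases _ _ _ _ h with ⟨h1, h2⟩ | ⟨h1, h2⟩
    · exact Prod.ext (hφ h1) (hφ h2)
    · exact absurd (((hφ h1) ▸ hq1).trans ((hφ h2) ▸ hp1)) (lt_irrefl _)

lemma eFin_mem_range (H : SimpleGraph (Fin k)) (φ : Fin k → Fin n)
    {q : Fin n × Fin n} (hq : q ∈ eFin H φ) :
    q.1 ∈ Set.range φ := by
  obtain ⟨p, -, rfl⟩ := Finset.mem_image.1 hq
  rcases min_choice (φ p.1) (φ p.2) with h | h <;> rw [h] <;> exact ⟨_, rfl⟩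

lemma eFin_disjoint (H : SimpleGraph (Fin k)) (φ ψ : Fin k → Fin n)
    (hd : Disjoint (Set.range φ) (Set.range ψ)) :
    Disjoint (eFin H φ) (eFin H ψ) := by
  rw [Finset.disjoint_left]
  intro q hqφ hqψ
  exact Set.disjoint_left.1 hd (eFin_mem_range H φ hqφ) (eFin_mem_range H ψ hqψ)

lemma integral_prod_eFin (hW : IsGraphon W) (H : SimpleGraph (Fin k)) (φ : Fin k → Fin n)
    (hφ : Function.Injective φ) :
    ∫ u, ∏ q ∈ eFin H φ, W (u q.1) (u q.2) ∂(pimeas n) = homDensity H W := by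
  have h1 : ∀ u : Fin n → ℝ, ∏ q ∈ eFin H φ, W (u q.1) (u q.2)
      = pairProd H.Adj W (u ∘ φ) := prod_eFin hW H φ hφ
  simp_rw [h1]
  rw [pimeas_eq, integral_precomp_inj φ hφ (measurable_pairProd hW _)]
  rfl

lemma integral_prod_eFin_mul (hW : IsGraphon W) (H : SimpleGraph (Fin k))
    (φ ψ : Fin k → Fin n) (hφ : Function.Injective φ) (hψ : Function.Injective ψ)
    (hd : Disjoint (Set.range φ) (Set.range ψ)) :
    ∫ u, (∏ q ∈ eFin H φ, W (u q.1) (u q.2)) * ∏ q ∈ eFin H ψ, W (u q.1) (u q.2) ∂(pimeas n)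
      = homDensity H W * homDensity H W := by
  have hρ : Function.Injective (Sum.elim φ ψ : Fin k ⊕ Fin k → Fin n) := by
    intro a b hab
    cases a with
    | inl a =>
      cases b with
      | inl b => exact congrArg Sum.inl (hφ hab)
      | inr b => exact (Set.disjoint_left.1 hd ⟨a, hab⟩ ⟨b, rfl⟩).elim
    | inr a =>
      cases b with
      | inl b => exact (Set.disjoint_left.1 hd ⟨b, hab.symm⟩ ⟨a, rfl⟩).elim
      | inr b => exact congrArg Sum.inr (hψ hab)
  have hpp : Measurable fun x : Fin k → ℝ => pairProd H.Adj W x := measurable_pairProd hW _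
  set G : ((Fin k ⊕ Fin k) → ℝ) → ℝ :=
    fun y => pairProd H.Adj W (y ∘ Sum.inl) * pairProd H.Adj W (y ∘ Sum.inr) with hGdef
  have hGmeas : Measurable G :=
    (hpp.comp (measurable_precomp Sum.inl)).mul (hpp.comp (measurable_precomp Sum.inr))
  have h1 : ∀ u : Fin n → ℝ, (∏ q ∈ eFin H φ, W (u q.1) (u q.2)) *
      ∏ q ∈ eFin H ψ, W (u q.1) (u q.2) = G (u ∘ Sum.elim φ ψ) := by
    intro u
    rw [prod_eFin hW H φ hφ u, prod_eFin hW H ψ hψ u]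
    rfl
  simp_rw [h1]
  rw [pimeas_eq, integral_precomp_inj _ hρ hGmeas]
  have hmp := measurePreserving_sumPiEquivProdPi
    (X := fun _ : Fin k ⊕ Fin k => ℝ) (fun _ => mu01)
  have h2 : ∫ y, G y ∂(piU (Fin k ⊕ Fin k))
      = ∫ z : (Fin k → ℝ) × (Fin k → ℝ),
          pairProd H.Adj W z.1 * pairProd H.Adj W z.2
          ∂((pimeas k).prod (pimeas k)) := by
    have := hmp.integral_comp
      (MeasurableEquiv.sumPiEquivProdPi fun _ : Fin k ⊕ Fin k => ℝ).measurableEmbedding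
      (fun z : (Fin k → ℝ) × (Fin k → ℝ) => pairProd H.Adj W z.1 * pairProd H.Adj W z.2)
    exact this
  rw [h2, integral_prod_mul]
  rfl

end EFin

section Moments
variable {W : ℝ → ℝ → ℝ} {k n : ℕ}

noncomputable def Injs (k n : ℕ) : Finset (Fin k → Fin n) :=
  Finset.univ.filter Function.Injective

lemma card_Injs (k n : ℕ) : (Injs k n).card = n.descFactorial k := by
  rw [Injs, ← Fintype.card_subtype,
    Fintype.card_congr (Equiv.subtypeInjectiveEquivEmbedding (Fin k) (Fin n)),
    Fintype.card_embedding_eq]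
  simp

def homEvent (W : ℝ → ℝ → ℝ) (H : SimpleGraph (Fin k)) (φ : Fin k → Fin n) :
    Set (GraphonSpace n) :=
  {ω | ∀ u v, H.Adj u v → (wGraph W ω).Adj (φ u) (φ v)}

noncomputable def indR {α : Type*} (A : Set α) (ω : α) : ℝ := if ω ∈ A then 1 else 0

lemma indR_eq_indicator {α : Type*} (A : Set α) :
    indR A = A.indicator (fun _ => (1:ℝ)) := by
  funext ω; rw [indR, Set.indicator_apply]

lemma measurable_indR {α : Type*} [MeasurableSpace α] {A : Set α} (hA : MeasurableSet A) :
    Measurable (indR A) := by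
  rw [indR_eq_indicator]; exact measurable_const.indicator hA

lemma integrable_indR {α : Type*} [MeasurableSpace α] {μ : Measure α} [IsProbabilityMeasure μ]
    {A : Set α} (hA : MeasurableSet A) : Integrable (indR A) μ := by
  rw [indR_eq_indicator]; exact (integrable_const (1:ℝ)).indicator hA

lemma integral_indR {α : Type*} [MeasurableSpace α] {μ : Measure α} [IsProbabilityMeasure μ]
    {A : Set α} (hA : MeasurableSet A) : ∫ ω, indR A ω ∂μ = (μ A).toReal := by
  rw [indR_eq_indicator]; exact integral_indicator_one (μ := μ) hA

lemma indR_mul_indR {α : Type*} (A B : Set α) (ω : α) :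
    indR A ω * indR B ω = indR (A ∩ B) ω := by
  by_cases hA : ω ∈ A <;> by_cases hB : ω ∈ B <;> simp [indR, hA, hB]

lemma injHomCount_eq (H : SimpleGraph (Fin k)) (ω : GraphonSpace n) :
    (injHomCount H (wGraph W ω) : ℝ) = ∑ φ ∈ Injs k n, indR (homEvent W H φ) ω := by
  rw [injHomCount, Finset.card_filter]
  push_cast
  rw [Injs, Finset.sum_filter]
  refine Finset.sum_congr rfl fun φ _ => ?_
  have hmem : (ω ∈ homEvent W H φ) = ∀ u v, H.Adj u v → (wGraph W ω).Adj (φ u) (φ v) := rfl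
  rw [indR, hmem]
  by_cases h1 : Function.Injective φ <;>
    by_cases h2 : ∀ u v, H.Adj u v → (wGraph W ω).Adj (φ u) (φ v) <;>
    simp [h1, h2]

variable (hW : IsGraphon W)
include hW

lemma measurableSet_homEvent (H : SimpleGraph (Fin k)) {φ : Fin k → Fin n}
    (hφ : Function.Injective φ) : MeasurableSet (homEvent W H φ) := by
  rw [homEvent, homEvent_eq H φ hφ]
  exact measurableSet_eventB hW _

lemma prob_homEvent (H : SimpleGraph (Fin k)) {φ : Fin k → Fin n}
    (hφ : Function.Injective φ) :
    (graphonMeasure n (homEvent W H φ)).toReal = homDensity H W := by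
  rw [homEvent, homEvent_eq H φ hφ, prob_eventB hW, integral_prod_eFin hW H φ hφ,
    ENNReal.toReal_ofReal]
  rw [homDensity]
  exact integral_nonneg (pairProd_nonneg hW _)

lemma prob_homEvent_inter (H : SimpleGraph (Fin k)) {φ ψ : Fin k → Fin n}
    (hφ : Function.Injective φ) (hψ : Function.Injective ψ)
    (hd : Disjoint (Set.range φ) (Set.range ψ)) :
    (graphonMeasure n (homEvent W H φ ∩ homEvent W H ψ)).toReal
      = homDensity H W * homDensity H W := by
  have hu : homEvent W H φ ∩ homEvent W H ψ = eventB W (eFin H φ ∪ eFin H ψ) := by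
    rw [homEvent, homEvent, homEvent_eq H φ hφ, homEvent_eq H ψ hψ]
    ext ω
    simp only [eventB, Set.mem_inter_iff, Set.mem_setOf_eq, Finset.mem_union]
    constructor
    · rintro ⟨h1, h2⟩ p hp
      rcases hp with hp | hp
      · exact h1 p hp
      · exact h2 p hp
    · intro h
      exact ⟨fun p hp => h p (Or.inl hp), fun p hp => h p (Or.inr hp)⟩
  rw [hu, prob_eventB hW]
  have hprod : ∀ u : Fin n → ℝ, ∏ q ∈ eFin H φ ∪ eFin H ψ, W (u q.1) (u q.2)
      = (∏ q ∈ eFin H φ, W (u q.1) (u q.2)) * ∏ q ∈ eFin H ψ, W (u q.1) (u q.2) := by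
    intro u
    exact Finset.prod_union (eFin_disjoint H φ ψ hd)
  simp_rw [hprod]
  rw [integral_prod_eFin_mul hW H φ ψ hφ hψ hd, ENNReal.toReal_ofReal]
  have h0 : 0 ≤ homDensity H W := integral_nonneg (pairProd_nonneg hW _)
  positivity

lemma homDensity_nonneg (H : SimpleGraph (Fin k)) : 0 ≤ homDensity H W :=
  integral_nonneg (pairProd_nonneg hW _)

lemma integrable_pairProd (H : SimpleGraph (Fin k)) :
    Integrable (pairProd H.Adj W) (pimeas k) := by
  refine (integrable_const (1:ℝ)).mono' (measurable_pairProd hW _).aestronglyMeasurable ?_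
  refine Filter.Eventually.of_forall fun x => ?_
  rw [Real.norm_eq_abs, abs_le]
  exact ⟨by linarith [pairProd_nonneg hW H.Adj x], pairProd_le_one hW H.Adj x⟩

lemma homDensity_le_one (H : SimpleGraph (Fin k)) : homDensity H W ≤ 1 := by
  rw [homDensity]
  calc ∫ x, pairProd H.Adj W x ∂(pimeas k)
      ≤ ∫ _, (1:ℝ) ∂(pimeas k) :=
        integral_mono (integrable_pairProd hW H) (integrable_const 1)
          (fun x => pairProd_le_one hW H.Adj x)
    _ = 1 := by simp

lemma moment1 (H : SimpleGraph (Fin k)) :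
    ∫ ω, (injHomCount H (wGraph W ω) : ℝ) ∂(graphonMeasure n)
      = (n.descFactorial k : ℝ) * homDensity H W := by
  have hrepr : ∀ ω : GraphonSpace n, (injHomCount H (wGraph W ω) : ℝ)
      = ∑ φ ∈ Injs k n, indR (homEvent W H φ) ω := fun ω => injHomCount_eq H ω
  rw [integral_congr_ae (Filter.Eventually.of_forall fun ω => hrepr ω)]
  have hint : ∀ φ ∈ Injs k n, Integrable (indR (homEvent W H φ)) (graphonMeasure n) := by
    intro φ hφ
    exact integrable_indR (measurableSet_homEvent hW H (Finset.mem_filter.1 hφ).2)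
  rw [integral_finset_sum _ hint]
  have : ∀ φ ∈ Injs k n, ∫ ω, indR (homEvent W H φ) ω ∂(graphonMeasure n)
      = homDensity H W := by
    intro φ hφ
    rw [integral_indR (measurableSet_homEvent hW H (Finset.mem_filter.1 hφ).2),
      prob_homEvent hW H (Finset.mem_filter.1 hφ).2]
  rw [Finset.sum_congr rfl this, Finset.sum_const, card_Injs, nsmul_eq_mul]

end Moments

section Variance
variable {W : ℝ → ℝ → ℝ} {k n : ℕ}

lemma card_disjoint_ge (φ : Fin k → Fin n) :
    (n - k).descFactorial k ≤
      ((Injs k n).filter fun ψ => Disjoint (Set.range φ) (Set.range ψ)).card := by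
  classical
  set S : Finset (Fin n) := Finset.univ \ Finset.image φ Finset.univ with hS
  have hcard : n - k ≤ S.card := by
    rw [hS, Finset.card_sdiff_of_subset (Finset.subset_univ _)]
    have h1 : (Finset.image φ Finset.univ).card ≤ k := by
      calc (Finset.image φ Finset.univ).card ≤ (Finset.univ : Finset (Fin k)).card :=
        Finset.card_image_le
      _ = k := by simp
    have h2 : (Finset.univ : Finset (Fin n)).card = n := by simp
    omega
  have hD : (n - k).descFactorial k ≤ Fintype.card (Fin k ↪ ↥S) := by
    rw [Fintype.card_embedding_eq]
    have : Fintype.card ↥S = S.card := Fintype.card_coe S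
    rw [this]
    simp only [Fintype.card_fin]
    exact Nat.descFactorial_le k hcard
  refine le_trans hD ?_
  have := Fintype.card_coe ((Injs k n).filter fun ψ => Disjoint (Set.range φ) (Set.range ψ))
  rw [← this]
  refine Fintype.card_le_of_injective (fun e => ⟨fun i => (e i : Fin n), ?_⟩) ?_
  · refine Finset.mem_filter.2 ⟨Finset.mem_filter.2 ⟨Finset.mem_univ _, ?_⟩, ?_⟩
    · intro a b hab
      exact e.injective (Subtype.ext hab)
    · rw [Set.disjoint_left]
      rintro a ⟨j, rfl⟩ ⟨i, hi⟩
      have hmem := Finset.mem_sdiff.1 (e i).2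
      refine hmem.2 ?_
      rw [show ((e i : Fin n)) = φ j from hi]
      exact Finset.mem_image.2 ⟨j, Finset.mem_univ _, rfl⟩
  · intro e₁ e₂ h
    have hfun : (fun i => ((e₁ i : Fin n))) = fun i => ((e₂ i : Fin n)) :=
      congrArg Subtype.val h
    exact Function.Embedding.ext fun i => Subtype.ext (congrFun hfun i)

variable (hW : IsGraphon W)
include hW

lemma moment2_le (H : SimpleGraph (Fin k)) :
    ∫ ω, (injHomCount H (wGraph W ω) : ℝ) ^ 2 ∂(graphonMeasure n)
      ≤ (n.descFactorial k : ℝ) ^ 2 * homDensity H W ^ 2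
        + (n.descFactorial k : ℝ) *
            ((n.descFactorial k : ℝ) - ((n - k).descFactorial k : ℝ)) := by
  classical
  set t := homDensity H W with ht
  have ht0 : 0 ≤ t := homDensity_nonneg hW H
  have hrepr : ∀ ω : GraphonSpace n, (injHomCount H (wGraph W ω) : ℝ) ^ 2
      = ∑ φ ∈ Injs k n, ∑ ψ ∈ Injs k n,
          indR (homEvent W H φ ∩ homEvent W H ψ) ω := by
    intro ω
    rw [injHomCount_eq H ω, sq, Finset.sum_mul_sum]
    exact Finset.sum_congr rfl fun φ _ => Finset.sum_congr rfl fun ψ _ =>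
      indR_mul_indR _ _ ω
  rw [integral_congr_ae (Filter.Eventually.of_forall hrepr)]
  have hint : ∀ φ ∈ Injs k n, ∀ ψ ∈ Injs k n,
      Integrable (indR (homEvent W H φ ∩ homEvent W H ψ)) (graphonMeasure n) := by
    intro φ hφ ψ hψ
    exact integrable_indR ((measurableSet_homEvent hW H (Finset.mem_filter.1 hφ).2).inter
      (measurableSet_homEvent hW H (Finset.mem_filter.1 hψ).2))
  have hint2 : ∀ φ ∈ Injs k n,
      Integrable (fun ω => ∑ ψ ∈ Injs k n, indR (homEvent W H φ ∩ homEvent W H ψ) ω)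
        (graphonMeasure n) := by
    intro φ hφ
    exact integrable_finset_sum _ (hint φ hφ)
  rw [integral_finset_sum _ hint2]
  have hterm : ∀ φ ∈ Injs k n,
      ∫ ω, ∑ ψ ∈ Injs k n, indR (homEvent W H φ ∩ homEvent W H ψ) ω ∂(graphonMeasure n)
      = ∑ ψ ∈ Injs k n,
          (graphonMeasure n (homEvent W H φ ∩ homEvent W H ψ)).toReal := by
    intro φ hφ
    rw [integral_finset_sum _ (hint φ hφ)]
    exact Finset.sum_congr rfl fun ψ hψ => integral_indR
      ((measurableSet_homEvent hW H (Finset.mem_filter.1 hφ).2).inter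
        (measurableSet_homEvent hW H (Finset.mem_filter.1 hψ).2))
  rw [Finset.sum_congr rfl hterm]
  have hbound : ∀ φ ∈ Injs k n,
      ∑ ψ ∈ Injs k n, (graphonMeasure n (homEvent W H φ ∩ homEvent W H ψ)).toReal
      ≤ (n.descFactorial k : ℝ) * t ^ 2
        + ((n.descFactorial k : ℝ) - ((n - k).descFactorial k : ℝ)) := by
    intro φ hφ
    have hφi := (Finset.mem_filter.1 hφ).2
    rw [← Finset.sum_filter_add_sum_filter_not (Injs k n)
      (fun ψ => Disjoint (Set.range φ) (Set.range ψ))]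
    have h1 : ∑ ψ ∈ (Injs k n).filter fun ψ => Disjoint (Set.range φ) (Set.range ψ),
        (graphonMeasure n (homEvent W H φ ∩ homEvent W H ψ)).toReal
        ≤ (n.descFactorial k : ℝ) * t ^ 2 := by
      have heq : ∀ ψ ∈ (Injs k n).filter fun ψ => Disjoint (Set.range φ) (Set.range ψ),
          (graphonMeasure n (homEvent W H φ ∩ homEvent W H ψ)).toReal = t ^ 2 := by
        intro ψ hψ
        obtain ⟨hψm, hdisj⟩ := Finset.mem_filter.1 hψ
        rw [prob_homEvent_inter hW H hφi (Finset.mem_filter.1 hψm).2 hdisj, sq]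
      rw [Finset.sum_congr rfl heq, Finset.sum_const, nsmul_eq_mul]
      have hc : (((Injs k n).filter fun ψ =>
          Disjoint (Set.range φ) (Set.range ψ)).card : ℝ) ≤ (n.descFactorial k : ℝ) := by
        have := Finset.card_filter_le (Injs k n)
          (fun ψ => Disjoint (Set.range φ) (Set.range ψ))
        rw [← card_Injs k n]
        exact_mod_cast this
      exact mul_le_mul_of_nonneg_right hc (by positivity)
    have h2 : ∑ ψ ∈ (Injs k n).filter fun ψ => ¬ Disjoint (Set.range φ) (Set.range ψ),
        (graphonMeasure n (homEvent W H φ ∩ homEvent W H ψ)).toReal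
        ≤ (n.descFactorial k : ℝ) - ((n - k).descFactorial k : ℝ) := by
      have hle1 : ∀ ψ ∈ (Injs k n).filter fun ψ => ¬ Disjoint (Set.range φ) (Set.range ψ),
          (graphonMeasure n (homEvent W H φ ∩ homEvent W H ψ)).toReal ≤ 1 := by
        intro ψ _
        have := prob_le_one (μ := graphonMeasure n) (s := homEvent W H φ ∩ homEvent W H ψ)
        exact ENNReal.toReal_mono ENNReal.one_ne_top this |>.trans_eq ENNReal.toReal_one
      calc ∑ ψ ∈ (Injs k n).filter fun ψ => ¬ Disjoint (Set.range φ) (Set.range ψ),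
            (graphonMeasure n (homEvent W H φ ∩ homEvent W H ψ)).toReal
          ≤ ∑ ψ ∈ (Injs k n).filter fun ψ => ¬ Disjoint (Set.range φ) (Set.range ψ), 1 :=
            Finset.sum_le_sum hle1
        _ = (((Injs k n).filter fun ψ => ¬ Disjoint (Set.range φ) (Set.range ψ)).card : ℝ) := by
            simp
        _ ≤ (n.descFactorial k : ℝ) - ((n - k).descFactorial k : ℝ) := by
            have hsplit := Finset.card_filter_add_card_filter_not (s := Injs k n)
              (fun ψ => Disjoint (Set.range φ) (Set.range ψ))
            rw [card_Injs] at hsplit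
            have hge := card_disjoint_ge (n := n) φ
            have heq1 : (((Injs k n).filter fun ψ =>
                ¬ Disjoint (Set.range φ) (Set.range ψ)).card : ℝ)
                = (n.descFactorial k : ℝ) - (((Injs k n).filter fun ψ =>
                    Disjoint (Set.range φ) (Set.range ψ)).card : ℝ) := by
              push_cast [← hsplit]
              ring
            have heq2 : ((n - k).descFactorial k : ℝ) ≤ (((Injs k n).filter fun ψ =>
                Disjoint (Set.range φ) (Set.range ψ)).card : ℝ) := by exact_mod_cast hge
            rw [heq1]
            linarith
    linarith
  calc ∑ φ ∈ Injs k n, ∑ ψ ∈ Injs k n,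
        (graphonMeasure n (homEvent W H φ ∩ homEvent W H ψ)).toReal
      ≤ ∑ φ ∈ Injs k n, ((n.descFactorial k : ℝ) * t ^ 2
          + ((n.descFactorial k : ℝ) - ((n - k).descFactorial k : ℝ))) :=
        Finset.sum_le_sum hbound
    _ = (n.descFactorial k : ℝ) ^ 2 * t ^ 2
        + (n.descFactorial k : ℝ) *
            ((n.descFactorial k : ℝ) - ((n - k).descFactorial k : ℝ)) := by
        rw [Finset.sum_const, card_Injs, nsmul_eq_mul]
        ring

end Variance

section Chebyshev
variable {W : ℝ → ℝ → ℝ} {k n : ℕ}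

lemma injHomCount_le (H : SimpleGraph (Fin k)) (G : SimpleGraph (Fin n)) :
    injHomCount H G ≤ n.descFactorial k := by
  rw [injHomCount, ← card_Injs k n, Injs]
  refine Finset.card_le_card ?_
  intro φ hφ
  obtain ⟨-, h1, -⟩ := Finset.mem_filter.1 hφ
  exact Finset.mem_filter.2 ⟨Finset.mem_univ _, h1⟩

variable (hW : IsGraphon W)
include hW

lemma measurable_X (H : SimpleGraph (Fin k)) :
    Measurable fun ω : GraphonSpace n => (injHomCount H (wGraph W ω) : ℝ) := by
  have hfe : (fun ω : GraphonSpace n => (injHomCount H (wGraph W ω) : ℝ))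
      = fun ω => ∑ φ ∈ Injs k n, indR (homEvent W H φ) ω := funext fun ω => injHomCount_eq H ω
  rw [hfe]
  exact Finset.measurable_sum _ fun φ hφ =>
    measurable_indR (measurableSet_homEvent hW H (Finset.mem_filter.1 hφ).2)

lemma measurable_Z (H : SimpleGraph (Fin k)) :
    Measurable fun ω : GraphonSpace n => empDensity H (wGraph W ω) := by
  have : (fun ω : GraphonSpace n => empDensity H (wGraph W ω))
      = fun ω => (injHomCount H (wGraph W ω) : ℝ) / (n.descFactorial k : ℝ) := rfl
  rw [this]
  exact (measurable_X hW H).div_const _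

lemma integrable_X (H : SimpleGraph (Fin k)) :
    Integrable (fun ω : GraphonSpace n => (injHomCount H (wGraph W ω) : ℝ))
      (graphonMeasure n) := by
  refine (integrable_const ((n.descFactorial k : ℝ))).mono'
    (measurable_X hW H).aestronglyMeasurable ?_
  refine Filter.Eventually.of_forall fun ω => ?_
  rw [Real.norm_eq_abs, abs_of_nonneg (by positivity)]
  exact_mod_cast injHomCount_le H (wGraph W ω)

lemma integrable_X_sq (H : SimpleGraph (Fin k)) :
    Integrable (fun ω : GraphonSpace n => (injHomCount H (wGraph W ω) : ℝ) ^ 2)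
      (graphonMeasure n) := by
  refine (integrable_const ((n.descFactorial k : ℝ) ^ 2)).mono'
    ((measurable_X hW H).pow_const 2).aestronglyMeasurable ?_
  refine Filter.Eventually.of_forall fun ω => ?_
  rw [Real.norm_eq_abs, abs_of_nonneg (by positivity)]
  have := injHomCount_le H (wGraph W ω)
  have h2 : (injHomCount H (wGraph W ω) : ℝ) ≤ (n.descFactorial k : ℝ) := by exact_mod_cast this
  have h0 : (0:ℝ) ≤ (injHomCount H (wGraph W ω) : ℝ) := by positivity
  nlinarith

lemma var_bound (H : SimpleGraph (Fin k)) (hkn : k ≤ n) :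
    ∫ ω, (empDensity H (wGraph W ω) - homDensity H W) ^ 2 ∂(graphonMeasure n)
      ≤ 1 - ((n - k).descFactorial k : ℝ) / (n.descFactorial k : ℝ) := by
  set t := homDensity H W with ht
  set N := (n.descFactorial k : ℝ) with hNdef
  have hN : 0 < N := by
    rw [hNdef]
    have : n.descFactorial k ≠ 0 := fun h =>
      absurd (Nat.descFactorial_eq_zero_iff_lt.1 h) (not_lt.2 hkn)
    exact_mod_cast Nat.pos_of_ne_zero this
  set X := fun ω : GraphonSpace n => (injHomCount H (wGraph W ω) : ℝ) with hX
  have hptw : ∀ ω : GraphonSpace n,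
      (empDensity H (wGraph W ω) - t) ^ 2
        = X ω ^ 2 / N ^ 2 - 2 * t / N * X ω + t ^ 2 := by
    intro ω
    have : empDensity H (wGraph W ω) = X ω / N := rfl
    rw [this]
    field_simp
    ring
  rw [integral_congr_ae (Filter.Eventually.of_forall hptw)]
  have hI1 : Integrable (fun ω => X ω ^ 2 / N ^ 2 - 2 * t / N * X ω) (graphonMeasure n) :=
    ((integrable_X_sq hW H).div_const _).sub ((integrable_X hW H).const_mul _)
  rw [integral_add hI1 (integrable_const _), integral_sub ((integrable_X_sq hW H).div_const _)
    ((integrable_X hW H).const_mul _), integral_div, integral_const_mul, integral_const]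
  simp only [probReal_univ, smul_eq_mul, one_mul]
  have hm1 : ∫ ω, X ω ∂(graphonMeasure n) = N * t := moment1 hW H
  have hm2 : ∫ ω, X ω ^ 2 ∂(graphonMeasure n)
      ≤ N ^ 2 * t ^ 2 + N * (N - ((n - k).descFactorial k : ℝ)) := moment2_le hW H
  rw [hm1]
  set D := ((n - k).descFactorial k : ℝ) with hDdef
  have hstep : (∫ ω, X ω ^ 2 ∂(graphonMeasure n)) / N ^ 2 ≤ t ^ 2 + (N - D) / N := by
    rw [div_le_iff₀ (by positivity)]
    calc ∫ ω, X ω ^ 2 ∂(graphonMeasure n) ≤ N ^ 2 * t ^ 2 + N * (N - D) := hm2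
      _ = (t ^ 2 + (N - D) / N) * N ^ 2 := by field_simp
  have h2tN : 2 * t / N * (N * t) = 2 * t ^ 2 := by field_simp
  rw [h2tN]
  have hfin : 1 - D / N = (N - D) / N := by field_simp
  linarith [hstep]

end Chebyshev

section Limits

lemma empDensity_nonneg {k n : ℕ} (H : SimpleGraph (Fin k)) (G : SimpleGraph (Fin n)) :
    0 ≤ empDensity H G := by
  rw [empDensity]; positivity

lemma empDensity_le_one {k n : ℕ} (H : SimpleGraph (Fin k)) (G : SimpleGraph (Fin n)) :
    empDensity H G ≤ 1 := by
  rw [empDensity]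
  rcases Nat.eq_zero_or_pos (n.descFactorial k) with h | h
  · simp [h]
  · rw [div_le_one (by exact_mod_cast h)]
    exact_mod_cast injHomCount_le H G

lemma aux_ratio (a b : ℕ) :
    Filter.Tendsto (fun n : ℕ => (((n - a : ℕ) : ℝ)) / (((n - b : ℕ) : ℝ)))
      Filter.atTop (nhds 1) := by
  have hx : Filter.Tendsto (fun n : ℕ => ((n : ℝ) - b)) Filter.atTop Filter.atTop :=
    Filter.tendsto_atTop_add_const_right _ _ tendsto_natCast_atTop_atTop
  have hinv : Filter.Tendsto (fun n : ℕ => ((n : ℝ) - b)⁻¹) Filter.atTop (nhds 0) :=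
    hx.inv_tendsto_atTop
  have h1 : Filter.Tendsto (fun n : ℕ => 1 + ((b : ℝ) - a) * ((n : ℝ) - b)⁻¹)
      Filter.atTop (nhds (1 + ((b : ℝ) - a) * 0)) :=
    tendsto_const_nhds.add (tendsto_const_nhds.mul hinv)
  rw [mul_zero, add_zero] at h1
  refine Filter.Tendsto.congr' ?_ h1
  filter_upwards [Filter.eventually_ge_atTop (a + b + 1)] with n hn
  have ha : a ≤ n := by omega
  have hb : b ≤ n := by omega
  have hbn : (b : ℝ) < (n : ℝ) := by exact_mod_cast (by omega : b < n)
  rw [Nat.cast_sub ha, Nat.cast_sub hb]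
  have hne : (n : ℝ) - b ≠ 0 := by linarith
  field_simp
  ring

lemma ratio_tendsto (k : ℕ) :
    Filter.Tendsto (fun n : ℕ => (((n - k).descFactorial k : ℝ)) / ((n.descFactorial k : ℝ)))
      Filter.atTop (nhds 1) := by
  have heq : ∀ n : ℕ, (((n - k).descFactorial k : ℝ)) / ((n.descFactorial k : ℝ))
      = ∏ i ∈ Finset.range k, (((n - (k + i) : ℕ) : ℝ) / ((n - i : ℕ) : ℝ)) := by
    intro n
    rw [Nat.descFactorial_eq_prod_range, Nat.descFactorial_eq_prod_range]
    push_cast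
    rw [Finset.prod_div_distrib]
    congr 1
    refine Finset.prod_congr rfl fun i _ => ?_
    rw [Nat.sub_sub]
  have hlim : Filter.Tendsto
      (fun n : ℕ => ∏ i ∈ Finset.range k, (((n - (k + i) : ℕ) : ℝ) / ((n - i : ℕ) : ℝ)))
      Filter.atTop (nhds (∏ _i ∈ Finset.range k, (1:ℝ))) :=
    tendsto_finset_prod _ fun i _ => aux_ratio (k + i) i
  rw [Finset.prod_const_one] at hlim
  exact Filter.Tendsto.congr (fun n => (heq n).symm) hlim

variable {W : ℝ → ℝ → ℝ} (hW : IsGraphon W)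
include hW

lemma prob_dev_le {k n : ℕ} (H : SimpleGraph (Fin k)) {ε : ℝ} (hε : 0 < ε) :
    (graphonMeasure n {ω | ε ≤ |empDensity H (wGraph W ω) - homDensity H W|}).toReal
      ≤ (∫ ω, (empDensity H (wGraph W ω) - homDensity H W) ^ 2 ∂(graphonMeasure n)) / ε ^ 2 := by
  set t := homDensity H W with ht
  set f := fun ω : GraphonSpace n => (empDensity H (wGraph W ω) - t) ^ 2 with hf
  have hfm : Measurable f := ((measurable_Z hW H).sub measurable_const).pow_const 2
  have hf0 : 0 ≤ᵐ[graphonMeasure n] f := Filter.Eventually.of_forall fun ω => sq_nonneg _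
  have ht0 : 0 ≤ t := homDensity_nonneg hW H
  have ht1 : t ≤ 1 := homDensity_le_one hW H
  have hfint : Integrable f (graphonMeasure n) := by
    refine (integrable_const (4:ℝ)).mono' hfm.aestronglyMeasurable ?_
    refine Filter.Eventually.of_forall fun ω => ?_
    rw [Real.norm_eq_abs, abs_of_nonneg (sq_nonneg _)]
    show (empDensity H (wGraph W ω) - t) ^ 2 ≤ 4
    have h1 := empDensity_nonneg H (wGraph W ω)
    have h2 := empDensity_le_one H (wGraph W ω)
    nlinarith
  have key := mul_meas_ge_le_integral_of_nonneg hf0 hfint (ε ^ 2)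
  have hsub : {ω : GraphonSpace n | ε ≤ |empDensity H (wGraph W ω) - t|}
      ⊆ {ω | ε ^ 2 ≤ f ω} := by
    intro ω hω
    have h1 : ε ^ 2 ≤ |empDensity H (wGraph W ω) - t| ^ 2 := by
      have := (pow_le_pow_left₀ hε.le hω 2)
      exact this
    rw [Set.mem_setOf_eq, hf]
    calc ε ^ 2 ≤ |empDensity H (wGraph W ω) - t| ^ 2 := h1
      _ = (empDensity H (wGraph W ω) - t) ^ 2 := sq_abs _
  have hmono := ENNReal.toReal_mono (measure_ne_top (graphonMeasure n) _) (measure_mono hsub)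
  rw [le_div_iff₀ (by positivity : (0:ℝ) < ε ^ 2)]
  calc (graphonMeasure n {ω | ε ≤ |empDensity H (wGraph W ω) - t|}).toReal * ε ^ 2
      ≤ (graphonMeasure n {ω | ε ^ 2 ≤ f ω}).toReal * ε ^ 2 :=
        mul_le_mul_of_nonneg_right hmono (by positivity)
    _ ≤ ∫ ω, f ω ∂(graphonMeasure n) := by rw [mul_comm]; exact key
  
lemma prob_dev_tendsto {k : ℕ} (H : SimpleGraph (Fin k)) {ε : ℝ} (hε : 0 < ε) :
    Filter.Tendsto
      (fun n => graphonMeasure n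
        {ω : GraphonSpace n | ε ≤ |empDensity H (wGraph W ω) - homDensity H W|})
      Filter.atTop (nhds 0) := by
  have hv : Filter.Tendsto
      (fun n : ℕ => (1 - (((n - k).descFactorial k : ℝ)) / ((n.descFactorial k : ℝ))) / ε ^ 2)
      Filter.atTop (nhds 0) := by
    have h2 : Filter.Tendsto
        (fun n : ℕ => 1 - (((n - k).descFactorial k : ℝ)) / ((n.descFactorial k : ℝ)))
        Filter.atTop (nhds (1 - 1)) := tendsto_const_nhds.sub (ratio_tendsto k)
    rw [sub_self] at h2
    simpa using h2.div_const (ε ^ 2)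
  have hreal : Filter.Tendsto
      (fun n => (graphonMeasure n
        {ω : GraphonSpace n | ε ≤ |empDensity H (wGraph W ω) - homDensity H W|}).toReal)
      Filter.atTop (nhds 0) := by
    refine squeeze_zero' (Filter.Eventually.of_forall fun n => ENNReal.toReal_nonneg) ?_ hv
    filter_upwards [Filter.eventually_ge_atTop k] with n hn
    refine (prob_dev_le hW H hε).trans ?_
    have hvb := var_bound hW H hn
    gcongr
  have heq : ∀ n, graphonMeasure n
      {ω : GraphonSpace n | ε ≤ |empDensity H (wGraph W ω) - homDensity H W|}
      = ENNReal.ofReal ((graphonMeasure n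
        {ω : GraphonSpace n | ε ≤ |empDensity H (wGraph W ω) - homDensity H W|}).toReal) :=
    fun n => (ENNReal.ofReal_toReal (measure_ne_top _ _)).symm
  have := (ENNReal.tendsto_ofReal hreal)
  rw [ENNReal.ofReal_zero] at this
  exact Filter.Tendsto.congr (fun n => (heq n).symm) this

end Limits

section GraphSpecific
variable {W : ℝ → ℝ → ℝ}

lemma pairProd_edge2 (W : ℝ → ℝ → ℝ) (y : Fin 2 → ℝ) :
    pairProd edge2.Adj W y = W (y 0) (y 1) := by
  rw [pairProd]
  rw [Finset.prod_eq_single ((0 : Fin 2), (1 : Fin 2))]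
  · have hc : ((0:Fin 2) < (1:Fin 2) ∧ edge2.Adj 0 1) := by
      constructor
      · decide
      · simp [edge2]
    simp [hc]
  · intro p _ hp
    have hc : ¬ (p.1 < p.2 ∧ edge2.Adj p.1 p.2) := by
      rcases p with ⟨a, b⟩
      fin_cases a <;> fin_cases b <;> simp_all <;> decide
    simp only [hc, if_false]
  · intro h
    exact absurd (Finset.mem_univ _) h

lemma measurable_Wpair (hW : IsGraphon W) {m : ℕ} (a b : Fin m) :
    Measurable fun x : Fin m → ℝ => W (x a) (x b) := by
  have : Measurable fun x : Fin m → ℝ => Function.uncurry W (x a, x b) :=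
    hW.1.comp ((measurable_pi_apply a).prodMk (measurable_pi_apply b))
  exact this

lemma integrable_Wpair (hW : IsGraphon W) {m : ℕ} (a b : Fin m) :
    Integrable (fun x : Fin m → ℝ => W (x a) (x b)) (pimeas m) := by
  refine (integrable_const (1:ℝ)).mono' (measurable_Wpair hW a b).aestronglyMeasurable ?_
  refine Filter.Eventually.of_forall fun x => ?_
  rw [Real.norm_eq_abs, abs_le]
  exact ⟨by linarith [(hW.2.2 (x a) (x b)).1], (hW.2.2 (x a) (x b)).2⟩

lemma integral_Wpair (hW : IsGraphon W) {m : ℕ} {a b : Fin m} (hab : a ≠ b) :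
    ∫ x, W (x a) (x b) ∂(pimeas m) = homDensity edge2 W := by
  have hφ : Function.Injective (![a, b] : Fin 2 → Fin m) := by
    intro i j hij
    fin_cases i <;> fin_cases j <;> simp_all
  have hF : Measurable fun y : Fin 2 → ℝ => W (y 0) (y 1) := measurable_Wpair hW 0 1
  have heq : (fun x : Fin m → ℝ => W (x a) (x b))
      = fun x => (fun y : Fin 2 → ℝ => W (y 0) (y 1)) (x ∘ ![a, b]) := rfl
  rw [heq, pimeas_eq, integral_precomp_inj ![a, b] hφ hF, homDensity]
  refine (integral_congr_ae (Filter.Eventually.of_forall fun y => ?_)).symm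
  exact pairProd_edge2 W y

lemma cycle4_edge_mem : ((0 : Fin 4), (1 : Fin 4)) ∈ ePairs cycle4.Adj := by
  refine Finset.mem_filter.2 ⟨Finset.mem_univ _, ?_, ?_⟩
  · decide
  · exact Or.inl rfl

lemma t2_pos (hW : IsGraphon W)
    (hne : homDensity edge2 W ^ 4 ≠ homDensity cycle4 W) : 0 < homDensity edge2 W := by
  rcases lt_or_ge 0 (homDensity edge2 W) with h | h
  · exact h
  · exfalso
    have ht0 : homDensity edge2 W = 0 := le_antisymm h (homDensity_nonneg hW _)
    have ht4 : homDensity cycle4 W = 0 := by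
      refine le_antisymm ?_ (homDensity_nonneg hW _)
      calc homDensity cycle4 W
          ≤ ∫ x, W (x 0) (x 1) ∂(pimeas 4) := by
            refine integral_mono (integrable_pairProd hW _) (integrable_Wpair hW 0 1)
              fun x => ?_
            exact pairProd_le_factor hW _ x cycle4_edge_mem
        _ = homDensity edge2 W := integral_Wpair hW (by decide)
        _ = 0 := ht0
    rw [ht0, ht4] at hne
    exact hne (by norm_num)

lemma t2_lt_one (hW : IsGraphon W)
    (hne : homDensity edge2 W ^ 4 ≠ homDensity cycle4 W) : homDensity edge2 W < 1 := by
  rcases lt_or_ge (homDensity edge2 W) 1 with h | h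
  · exact h
  · exfalso
    have ht1 : homDensity edge2 W = 1 := le_antisymm (homDensity_le_one hW _) h
    have hsum : Integrable
        (fun x : Fin 4 → ℝ => ∑ p ∈ ePairs cycle4.Adj, (1 - W (x p.1) (x p.2)))
        (pimeas 4) :=
      integrable_finset_sum _ fun p _ => (integrable_const 1).sub (integrable_Wpair hW p.1 p.2)
    have key : 1 - homDensity cycle4 W
        ≤ ∑ p ∈ ePairs cycle4.Adj, (1 - homDensity edge2 W) := by
      have h1 : 1 - homDensity cycle4 W
          = ∫ x, (1 - pairProd cycle4.Adj W x) ∂(pimeas 4) := by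
        rw [integral_sub (integrable_const 1) (integrable_pairProd hW _), integral_const]
        simp [homDensity]
      rw [h1]
      calc ∫ x, (1 - pairProd cycle4.Adj W x) ∂(pimeas 4)
          ≤ ∫ x, ∑ p ∈ ePairs cycle4.Adj, (1 - W (x p.1) (x p.2)) ∂(pimeas 4) :=
            integral_mono ((integrable_const 1).sub (integrable_pairProd hW _)) hsum
              fun x => one_sub_pairProd_le hW _ x
        _ = ∑ p ∈ ePairs cycle4.Adj, ∫ x, (1 - W (x p.1) (x p.2)) ∂(pimeas 4) :=
            integral_finset_sum _ fun p _ =>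
              (integrable_const 1).sub (integrable_Wpair hW p.1 p.2)
        _ = ∑ p ∈ ePairs cycle4.Adj, (1 - homDensity edge2 W) := by
            refine Finset.sum_congr rfl fun p hp => ?_
            rw [integral_sub (integrable_const 1) (integrable_Wpair hW p.1 p.2),
              integral_const]
            have hne' : p.1 ≠ p.2 := ne_of_lt (Finset.mem_filter.1 hp).2.1
            rw [integral_Wpair hW hne']
            simp
    rw [ht1] at key
    simp only [sub_self, Finset.sum_const, smul_zero] at key
    have ht4 : homDensity cycle4 W = 1 :=
      le_antisymm (homDensity_le_one hW _) (by linarith)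
    rw [ht1, ht4] at hne
    exact hne (by norm_num)

end GraphSpecific

section FinalAlgebra

/-- The deterministic estimate: if the empirical densities are close to the true ones
and `n` is large, the test statistic is large. -/
lemma key_ineq {t2 t4 δ ε c : ℝ} (hδ : δ = |t2 ^ 4 - t4|) (hδ0 : 0 < δ)
    (ht2a : 0 < t2) (ht2b : t2 < 1) (hc : 0 < c)
    (hεδ : ε ≤ δ / 10) (hεt : ε ≤ t2 / 2) (hεu : ε ≤ (1 - t2) / 2)
    {n : ℕ} (hn1 : 1 ≤ n) (hn2 : c * (8 * Real.sqrt 2) / δ < n)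
    {Z2 Z4 : ℝ} (hZ20 : 0 ≤ Z2) (hZ21 : Z2 ≤ 1)
    (h2 : |Z2 - t2| < ε) (h4 : |Z4 - t4| < ε) :
    c < |(n : ℝ) ^ ((3 : ℝ) / 2) * (Z2 ^ 4 - Z4)
        / (4 * Real.sqrt 2 * Z2 ^ 3 * (1 - Z2))| := by
  have hs2 : 0 < Real.sqrt 2 := Real.sqrt_pos.2 (by norm_num)
  obtain ⟨h2a, h2b⟩ := abs_lt.1 h2
  have hZ2lb : t2 / 2 ≤ Z2 := by linarith
  have hZ2pos : 0 < Z2 := lt_of_lt_of_le (by linarith) hZ2lb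
  have h1Z : (1 - t2) / 2 ≤ 1 - Z2 := by linarith
  have h1Zpos : 0 < 1 - Z2 := lt_of_lt_of_le (by linarith) h1Z
  set den := 4 * Real.sqrt 2 * Z2 ^ 3 * (1 - Z2) with hden
  have hden0 : 0 < den := by
    refine mul_pos (mul_pos (mul_pos (by norm_num) hs2) (pow_pos hZ2pos 3)) h1Zpos
  have hZ3le : Z2 ^ 3 ≤ 1 := pow_le_one₀ hZ20 hZ21
  have hfrac : Z2 ^ 3 * (1 - Z2) ≤ 1 :=
    mul_le_one₀ hZ3le (by linarith) (by linarith)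
  have hden_le : den ≤ 4 * Real.sqrt 2 := by
    rw [hden]
    calc 4 * Real.sqrt 2 * Z2 ^ 3 * (1 - Z2) = 4 * Real.sqrt 2 * (Z2 ^ 3 * (1 - Z2)) := by ring
      _ ≤ 4 * Real.sqrt 2 * 1 := by
          exact mul_le_mul_of_nonneg_left hfrac (by positivity)
      _ = 4 * Real.sqrt 2 := by ring
  -- numerator bound
  have habs4 : |Z2 ^ 4 - t2 ^ 4| ≤ 4 * |Z2 - t2| := by
    have hiden : Z2 ^ 4 - t2 ^ 4
        = (Z2 - t2) * (Z2 ^ 3 + Z2 ^ 2 * t2 + Z2 * t2 ^ 2 + t2 ^ 3) := by ring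
    rw [hiden, abs_mul]
    have hb : |Z2 ^ 3 + Z2 ^ 2 * t2 + Z2 * t2 ^ 2 + t2 ^ 3| ≤ 4 := by
      rw [abs_of_nonneg (by positivity)]
      have e1 : Z2 ^ 3 ≤ 1 := hZ3le
      have e2 : Z2 ^ 2 * t2 ≤ 1 := mul_le_one₀ (pow_le_one₀ hZ20 hZ21) ht2a.le ht2b.le
      have e3 : Z2 * t2 ^ 2 ≤ 1 :=
        mul_le_one₀ hZ21 (by positivity) (pow_le_one₀ ht2a.le ht2b.le)
      have e4 : t2 ^ 3 ≤ 1 := pow_le_one₀ ht2a.le ht2b.le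
      linarith
    calc |Z2 - t2| * |Z2 ^ 3 + Z2 ^ 2 * t2 + Z2 * t2 ^ 2 + t2 ^ 3|
        ≤ |Z2 - t2| * 4 := mul_le_mul_of_nonneg_left hb (abs_nonneg _)
      _ = 4 * |Z2 - t2| := by ring
  have hnum : δ / 2 ≤ |Z2 ^ 4 - Z4| := by
    have htri : |t2 ^ 4 - t4| ≤ |Z2 ^ 4 - Z4| + (|Z2 ^ 4 - t2 ^ 4| + |Z4 - t4|) := by
      have hid : t2 ^ 4 - t4 = (Z2 ^ 4 - Z4) + ((t2 ^ 4 - Z2 ^ 4) + (Z4 - t4)) := by ring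
      calc |t2 ^ 4 - t4| = |(Z2 ^ 4 - Z4) + ((t2 ^ 4 - Z2 ^ 4) + (Z4 - t4))| := by rw [← hid]
        _ ≤ |Z2 ^ 4 - Z4| + |(t2 ^ 4 - Z2 ^ 4) + (Z4 - t4)| := abs_add_le _ _
        _ ≤ |Z2 ^ 4 - Z4| + (|t2 ^ 4 - Z2 ^ 4| + |Z4 - t4|) := by
            have := abs_add_le (t2 ^ 4 - Z2 ^ 4) (Z4 - t4)
            linarith
        _ = |Z2 ^ 4 - Z4| + (|Z2 ^ 4 - t2 ^ 4| + |Z4 - t4|) := by rw [abs_sub_comm (t2^4)]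
    have h4' : |Z4 - t4| < ε := h4
    rw [← hδ] at htri
    linarith [habs4, abs_lt.1 h2]
  -- rpow bound
  have hn1' : (1 : ℝ) ≤ (n : ℝ) := by exact_mod_cast hn1
  have h32 : (n : ℝ) ≤ (n : ℝ) ^ ((3 : ℝ) / 2) := by
    calc (n : ℝ) = (n : ℝ) ^ (1 : ℝ) := (Real.rpow_one _).symm
      _ ≤ (n : ℝ) ^ ((3 : ℝ) / 2) :=
          Real.rpow_le_rpow_of_exponent_le hn1' (by norm_num)
  have hr0 : (0 : ℝ) ≤ (n : ℝ) ^ ((3 : ℝ) / 2) := Real.rpow_nonneg (by positivity) _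
  have habsT : |(n : ℝ) ^ ((3 : ℝ) / 2) * (Z2 ^ 4 - Z4) / den|
      = (n : ℝ) ^ ((3 : ℝ) / 2) * |Z2 ^ 4 - Z4| / den := by
    rw [abs_div, abs_mul, abs_of_nonneg hr0, abs_of_pos hden0]
  rw [habsT]
  have step1 : c < (n : ℝ) * (δ / 2) / (4 * Real.sqrt 2) := by
    rw [lt_div_iff₀ (by positivity)]
    rw [div_lt_iff₀ hδ0] at hn2
    nlinarith
  refine lt_of_lt_of_le step1 ?_
  calc (n : ℝ) * (δ / 2) / (4 * Real.sqrt 2)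
      ≤ (n : ℝ) ^ ((3 : ℝ) / 2) * (δ / 2) / (4 * Real.sqrt 2) := by gcongr
    _ ≤ (n : ℝ) ^ ((3 : ℝ) / 2) * |Z2 ^ 4 - Z4| / den := by
        gcongr
  
end FinalAlgebra
/-- Consistency of the global-structure test: if
`t(K₂,W)⁴ ≠ t(C₄,W)` then `P(|T_n| > c) → 1` for every `c > 0`. -/
theorem global_structure_test_consistent (W : ℝ → ℝ → ℝ) (hW : IsGraphon W)
    (hne : homDensity edge2 W ^ 4 ≠ homDensity cycle4 W) :
    ∀ c > 0, Filter.Tendsto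
      (fun n => graphonMeasure n {ω |
        c < |(n : ℝ) ^ ((3 : ℝ) / 2) *
            (empDensity edge2 (wGraph W ω) ^ 4 - empDensity cycle4 (wGraph W ω))
          / (4 * Real.sqrt 2 * empDensity edge2 (wGraph W ω) ^ 3
              * (1 - empDensity edge2 (wGraph W ω)))|})
      Filter.atTop (nhds 1) := by
  intro c hc
  have hδ0 : 0 < |homDensity edge2 W ^ 4 - homDensity cycle4 W| :=
    abs_pos.2 (sub_ne_zero.2 hne)
  have ht2a : 0 < homDensity edge2 W := t2_pos hW hne
  have ht2b : homDensity edge2 W < 1 := t2_lt_one hW hne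
  set t2 := homDensity edge2 W with ht2def
  set t4 := homDensity cycle4 W with ht4def
  set δ := |t2 ^ 4 - t4| with hδdef
  set ε := min (δ / 10) (min (t2 / 2) ((1 - t2) / 2)) with hεdef
  have hε0 : 0 < ε := lt_min (by positivity) (lt_min (by linarith) (by linarith))
  have hεδ : ε ≤ δ / 10 := min_le_left _ _
  have hεt : ε ≤ t2 / 2 := (min_le_right _ _).trans (min_le_left _ _)
  have hεu : ε ≤ (1 - t2) / 2 := (min_le_right _ _).trans (min_le_right _ _)
  have hb2 := prob_dev_tendsto hW edge2 hε0
  have hb4 := prob_dev_tendsto hW cycle4 hε0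
  set B2 : (n : ℕ) → Set (GraphonSpace n) := fun n =>
    {ω | ε ≤ |empDensity edge2 (wGraph W ω) - t2|} with hB2def
  set B4 : (n : ℕ) → Set (GraphonSpace n) := fun n =>
    {ω | ε ≤ |empDensity cycle4 (wGraph W ω) - t4|} with hB4def
  set G : (n : ℕ) → Set (GraphonSpace n) := fun n =>
    {ω | |empDensity edge2 (wGraph W ω) - t2| < ε}
      ∩ {ω | |empDensity cycle4 (wGraph W ω) - t4| < ε} with hGdef
  have hGmeas : ∀ n, MeasurableSet (G n) := by
    intro n
    refine MeasurableSet.inter ?_ ?_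
    · exact measurableSet_lt ((measurable_Z hW edge2).sub measurable_const).abs
        measurable_const
    · exact measurableSet_lt ((measurable_Z hW cycle4).sub measurable_const).abs
        measurable_const
  have hGcompl : ∀ n, graphonMeasure n ((G n)ᶜ)
      ≤ graphonMeasure n (B2 n) + graphonMeasure n (B4 n) := by
    intro n
    rw [hGdef, Set.compl_inter]
    refine (measure_union_le _ _).trans ?_
    have e2 : {ω : GraphonSpace n | |empDensity edge2 (wGraph W ω) - t2| < ε}ᶜ = B2 n := by
      ext ω; simp [hB2def, not_lt]
    have e4 : {ω : GraphonSpace n | |empDensity cycle4 (wGraph W ω) - t4| < ε}ᶜ = B4 n := by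
      ext ω; simp [hB4def, not_lt]
    rw [e2, e4]
  -- the target sets
  set S : (n : ℕ) → Set (GraphonSpace n) := fun n => {ω |
        c < |(n : ℝ) ^ ((3 : ℝ) / 2) *
            (empDensity edge2 (wGraph W ω) ^ 4 - empDensity cycle4 (wGraph W ω))
          / (4 * Real.sqrt 2 * empDensity edge2 (wGraph W ω) ^ 3
              * (1 - empDensity edge2 (wGraph W ω)))|} with hSdef
  have hsubset : ∀ n : ℕ, 1 ≤ n → c * (8 * Real.sqrt 2) / δ < (n : ℝ) →
      G n ⊆ S n := by
    intro n hn1 hn2 ω hω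
    obtain ⟨hω2, hω4⟩ := hω
    exact key_ineq hδdef hδ0 ht2a ht2b hc hεδ hεt hεu hn1 hn2
      (empDensity_nonneg edge2 (wGraph W ω)) (empDensity_le_one edge2 (wGraph W ω))
      hω2 hω4
  have hlarge : ∀ᶠ n : ℕ in Filter.atTop, c * (8 * Real.sqrt 2) / δ < (n : ℝ) :=
    tendsto_natCast_atTop_atTop.eventually (Filter.eventually_gt_atTop _)
  have hlower : ∀ᶠ n : ℕ in Filter.atTop,
      1 - (graphonMeasure n (B2 n) + graphonMeasure n (B4 n)) ≤ graphonMeasure n (S n) := by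
    filter_upwards [Filter.eventually_ge_atTop 1, hlarge] with n hn1 hn2
    rw [tsub_le_iff_right]
    have hsplit : (1 : ENNReal) = graphonMeasure n (G n) + graphonMeasure n ((G n)ᶜ) :=
      (prob_add_prob_compl (hGmeas n)).symm
    calc (1 : ENNReal) = graphonMeasure n (G n) + graphonMeasure n ((G n)ᶜ) := hsplit
      _ ≤ graphonMeasure n (S n)
          + (graphonMeasure n (B2 n) + graphonMeasure n (B4 n)) :=
        add_le_add (measure_mono (hsubset n hn1 hn2)) (hGcompl n)
  have hsum0 : Filter.Tendsto
      (fun n => graphonMeasure n (B2 n) + graphonMeasure n (B4 n))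
      Filter.atTop (nhds 0) := by
    have := Filter.Tendsto.add hb2 hb4
    simpa using this
  have hlim : Filter.Tendsto
      (fun n => 1 - (graphonMeasure n (B2 n) + graphonMeasure n (B4 n)))
      Filter.atTop (nhds 1) := by
    have hcont := (ENNReal.continuous_sub_left ENNReal.one_ne_top).tendsto 0
    have := hcont.comp hsum0
    rw [tsub_zero] at this
    exact this
  refine tendsto_of_tendsto_of_tendsto_of_le_of_le' hlim tendsto_const_nhds hlower ?_
  exact Filter.Eventually.of_forall fun n => prob_le_one
end

section
/- For every integer L ≥ 3 and every M > 0 there exists a constant C = C(L,M) such that for all symmetric measurable kernels U₁, U₂ : [0,1]² → [−M,M]: |∫₀¹ U₁^{(L)}(x,x) dx − ∫₀¹ U₂^{(L)}(x,x) dx| ≤ C·‖U₁ − U₂‖_□. -/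
open MeasureTheory
open scoped Classical

/-- Path compositions of a kernel: `pathComp U L = U^{(L+1)}`, so that
`pathComp U 0 = U^{(1)} = U`. -/
noncomputable def pathComp (U : ℝ → ℝ → ℝ) : ℕ → ℝ → ℝ → ℝ
  | 0 => U
  | L + 1 => fun x y => ∫ w, pathComp U L x w * U w y ∂mu01

/-- The cut norm `‖U‖_□` of a kernel on `[0,1]²`. -/
noncomputable def cutNorm (U : ℝ → ℝ → ℝ) : ℝ :=
  ⨆ fg : {f : ℝ → ℝ // Measurable f ∧ ∀ x, f x ∈ Set.Icc (0 : ℝ) 1} ×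
      {g : ℝ → ℝ // Measurable g ∧ ∀ x, g x ∈ Set.Icc (0 : ℝ) 1},
    |∫ x, ∫ y, U x y * fg.1.1 x * fg.2.1 y ∂mu01 ∂mu01|

namespace CutAux

/-- bounded measurable kernel -/
def Ker (c : ℝ) (U : ℝ → ℝ → ℝ) : Prop :=
  Measurable (Function.uncurry U) ∧ ∀ x y, |U x y| ≤ c

noncomputable def kcomp (A B : ℝ → ℝ → ℝ) : ℝ → ℝ → ℝ :=
  fun x y => ∫ w, A x w * B w y ∂mu01

noncomputable def ktr (A : ℝ → ℝ → ℝ) : ℝ := ∫ x, A x x ∂mu01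

lemma abs_integral_le {f : ℝ → ℝ} {c : ℝ} (hb : ∀ x, |f x| ≤ c) :
    |∫ x, f x ∂mu01| ≤ c := by
  have h : ∀ᵐ x ∂mu01, ‖f x‖ ≤ c := ae_of_all _ fun x => by
    simpa [Real.norm_eq_abs] using hb x
  have := norm_integral_le_of_norm_le_const (μ := mu01) h
  simpa [Real.norm_eq_abs, measure_univ] using this

lemma integrable_bdd {f : ℝ → ℝ} (hm : AEStronglyMeasurable f mu01) {c : ℝ}
    (hb : ∀ x, |f x| ≤ c) : Integrable f mu01 := by
  refine (integrable_const c).mono' hm (ae_of_all _ fun x => ?_)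
  simpa [Real.norm_eq_abs] using hb x

lemma integrable_bdd_prod {f : ℝ × ℝ → ℝ} (hm : AEStronglyMeasurable f (mu01.prod mu01))
    {c : ℝ} (hb : ∀ p, |f p| ≤ c) : Integrable f (mu01.prod mu01) := by
  refine (integrable_const c).mono' hm (ae_of_all _ fun x => ?_)
  simpa [Real.norm_eq_abs] using hb x

lemma Ker.ml {c : ℝ} {U : ℝ → ℝ → ℝ} (h : Ker c U) (x : ℝ) : Measurable (U x) :=
  h.1.comp (measurable_const.prodMk measurable_id)

lemma Ker.mr {c : ℝ} {U : ℝ → ℝ → ℝ} (h : Ker c U) (y : ℝ) : Measurable fun x => U x y :=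
  h.1.comp (measurable_id.prodMk measurable_const)

lemma Ker.comp {a b : ℝ} {A B : ℝ → ℝ → ℝ} (hA : Ker a A) (hB : Ker b B)
    (ha : 0 ≤ a) : Ker (a * b) (kcomp A B) := by
  constructor
  · have hF : Measurable fun p : (ℝ × ℝ) × ℝ => A p.1.1 p.2 * B p.2 p.1.2 := by
      exact (hA.1.comp ((measurable_fst.fst).prodMk measurable_snd)).mul
        (hB.1.comp (measurable_snd.prodMk (measurable_fst.snd)))
    have := (hF.stronglyMeasurable.integral_prod_right' (ν := mu01)).measurable
    exact this
  · intro x y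
    refine abs_integral_le fun w => ?_
    rw [abs_mul]
    exact mul_le_mul (hA.2 x w) (hB.2 w y) (abs_nonneg _) ha

lemma Ker.diag_integrable {c : ℝ} {K : ℝ → ℝ → ℝ} (h : Ker c K) :
    Integrable (fun x => K x x) mu01 := by
  refine integrable_bdd ((h.1.comp (measurable_id.prodMk measurable_id)).aestronglyMeasurable)
    (fun x => h.2 x x)

/-- integrability of bounded-kernel products on the square, uncurried -/
lemma Ker.int_prod {a b : ℝ} {A B : ℝ → ℝ → ℝ} (hA : Ker a A) (hB : Ker b B) (ha : 0 ≤ a)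
    (x y : ℝ) : Integrable (fun w => A x w * B w y) mu01 := by
  refine integrable_bdd (((hA.ml x).mul (hB.mr y)).aestronglyMeasurable) (c := a * b)
    fun w => ?_
  rw [abs_mul]; exact mul_le_mul (hA.2 x w) (hB.2 w y) (abs_nonneg _) ha


/-- Fubini swap for bounded measurable double integrands. -/
lemma swap_int {F : ℝ → ℝ → ℝ} (hm : Measurable (Function.uncurry F)) {c : ℝ}
    (hb : ∀ x y, |F x y| ≤ c) :
    ∫ x, ∫ y, F x y ∂mu01 ∂mu01 = ∫ y, ∫ x, F x y ∂mu01 ∂mu01 := by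
  refine integral_integral_swap ?_
  exact integrable_bdd_prod hm.aestronglyMeasurable (fun p => hb p.1 p.2)

lemma kcomp_assoc {a b c : ℝ} {A B C : ℝ → ℝ → ℝ} (hA : Ker a A) (hB : Ker b B)
    (hC : Ker c C) (ha : 0 ≤ a) (hb : 0 ≤ b) (hc : 0 ≤ c) :
    kcomp (kcomp A B) C = kcomp A (kcomp B C) := by
  funext x y
  have h1 : kcomp (kcomp A B) C x y = ∫ z, ∫ w, A x w * B w z * C z y ∂mu01 ∂mu01 := by
    unfold kcomp
    congr 1; funext z
    rw [← integral_mul_const]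
  have h2 : kcomp A (kcomp B C) x y = ∫ w, ∫ z, A x w * (B w z * C z y) ∂mu01 ∂mu01 := by
    unfold kcomp
    congr 1; funext w
    rw [← integral_const_mul]
  rw [h1, h2]
  have hmm : Measurable (Function.uncurry fun z w => A x w * B w z * C z y) := by
    apply Measurable.mul
    apply Measurable.mul
    · exact (hA.ml x).comp measurable_snd
    · exact hB.1.comp (measurable_snd.prodMk measurable_fst)
    · exact (hC.mr y).comp measurable_fst
  have hs := swap_int hmm (c := a * b * c) (fun z w => by
    rw [abs_mul, abs_mul]
    exact mul_le_mul (mul_le_mul (hA.2 x w) (hB.2 w z) (abs_nonneg _) ha)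
      (hC.2 z y) (abs_nonneg _) (mul_nonneg ha hb))
  rw [hs]
  congr 1; funext w; congr 1; funext z; ring

lemma ktr_comm {a b : ℝ} {A B : ℝ → ℝ → ℝ} (hA : Ker a A) (hB : Ker b B)
    (ha : 0 ≤ a) (hb : 0 ≤ b) :
    ktr (kcomp A B) = ktr (kcomp B A) := by
  unfold ktr kcomp
  have hmm : Measurable (Function.uncurry fun x w => A x w * B w x) := by
    exact (hA.1.comp (measurable_fst.prodMk measurable_snd)).mul
      (hB.1.comp (measurable_snd.prodMk measurable_fst))
  have hs := swap_int hmm (c := a * b) (fun x w => by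
    rw [abs_mul]; exact mul_le_mul (hA.2 x w) (hB.2 w x) (abs_nonneg _) ha)
  rw [hs]
  congr 1; funext w; congr 1; funext x; ring

lemma kcomp_sub_left {m c : ℝ} {X₁ X₂ C : ℝ → ℝ → ℝ} (hX₁ : Ker m X₁) (hX₂ : Ker m X₂)
    (hC : Ker c C) (hm : 0 ≤ m) (x y : ℝ) :
    kcomp (fun u v => X₂ u v - X₁ u v) C x y = kcomp X₂ C x y - kcomp X₁ C x y := by
  unfold kcomp
  rw [← integral_sub (hX₂.int_prod hC hm x y) (hX₁.int_prod hC hm x y)]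
  congr 1; funext w; ring

lemma ktr_sub {m c : ℝ} {X₁ X₂ C : ℝ → ℝ → ℝ} (hX₁ : Ker m X₁) (hX₂ : Ker m X₂)
    (hC : Ker c C) (hm : 0 ≤ m) :
    ktr (kcomp (fun u v => X₂ u v - X₁ u v) C) = ktr (kcomp X₂ C) - ktr (kcomp X₁ C) := by
  unfold ktr
  rw [← integral_sub ((hX₂.comp hC hm).diag_integrable) ((hX₁.comp hC hm).diag_integrable)]
  congr 1; funext x
  exact kcomp_sub_left hX₁ hX₂ hC hm x x


lemma triB {v aa bb cc : ℝ} (ha : |aa| ≤ v) (hb : |bb| ≤ 1) (hc : |cc| ≤ 1) :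
    |aa * bb * cc| ≤ v := by
  have hv : (0:ℝ) ≤ v := (abs_nonneg _).trans ha
  calc |aa * bb * cc| = |aa| * |bb| * |cc| := by rw [abs_mul, abs_mul]
    _ ≤ v * 1 * 1 := by
        refine mul_le_mul (mul_le_mul ha hb (abs_nonneg _) hv) hc (abs_nonneg _) ?_
        nlinarith
    _ = v := by ring

end CutAux


namespace CutAux

abbrev Wit := {f : ℝ → ℝ // Measurable f ∧ ∀ x, f x ∈ Set.Icc (0 : ℝ) 1}

lemma cutNorm_bddAbove {v : ℝ} {V : ℝ → ℝ → ℝ} (hV : Ker v V) :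
    BddAbove (Set.range fun fg : Wit × Wit =>
      |∫ x, ∫ y, V x y * fg.1.1 x * fg.2.1 y ∂mu01 ∂mu01|) := by
  refine ⟨v, ?_⟩
  rintro r ⟨fg, rfl⟩
  refine abs_integral_le fun x => abs_integral_le fun y => ?_
  have h1 := (fg.1.2.2 x); have h2 := (fg.2.2.2 y)
  exact triB (hV.2 x y) (abs_le.2 ⟨by linarith [h1.1], h1.2⟩)
    (abs_le.2 ⟨by linarith [h2.1], h2.2⟩)

lemma le_cutNorm {v : ℝ} {V : ℝ → ℝ → ℝ} (hV : Ker v V) {φ ψ : ℝ → ℝ}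
    (hφ : Measurable φ) (hψ : Measurable ψ)
    (hφ1 : ∀ x, φ x ∈ Set.Icc (0:ℝ) 1) (hψ1 : ∀ x, ψ x ∈ Set.Icc (0:ℝ) 1) :
    |∫ x, ∫ y, V x y * φ x * ψ y ∂mu01 ∂mu01| ≤ cutNorm V :=
  le_ciSup (cutNorm_bddAbove hV) (⟨⟨φ, hφ, hφ1⟩, ⟨ψ, hψ, hψ1⟩⟩ : Wit × Wit)

lemma cutNorm_nonneg {v : ℝ} {V : ℝ → ℝ → ℝ} (hV : Ker v V) : 0 ≤ cutNorm V := by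
  have := le_cutNorm hV (φ := fun _ => 0) (ψ := fun _ => 0) measurable_const measurable_const
    (fun _ => by norm_num) (fun _ => by norm_num)
  exact (abs_nonneg _).trans this

/-- `|∫∫ V f g| ≤ 4‖V‖_□` for measurable `|f|,|g| ≤ 1`. -/
lemma cut_bound {v : ℝ} {V : ℝ → ℝ → ℝ} (hV : Ker v V) {f g : ℝ → ℝ}
    (hf : Measurable f) (hg : Measurable g) (hf1 : ∀ x, |f x| ≤ 1) (hg1 : ∀ x, |g x| ≤ 1) :
    |∫ x, ∫ y, V x y * f x * g y ∂mu01 ∂mu01| ≤ 4 * cutNorm V := by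
  set fp : ℝ → ℝ := fun x => max (f x) 0 with hfp
  set fm : ℝ → ℝ := fun x => max (-f x) 0 with hfm
  set gp : ℝ → ℝ := fun x => max (g x) 0 with hgp
  set gm : ℝ → ℝ := fun x => max (-g x) 0 with hgm
  have mfp : Measurable fp := hf.max measurable_const
  have mfm : Measurable fm := hf.neg.max measurable_const
  have mgp : Measurable gp := hg.max measurable_const
  have mgm : Measurable gm := hg.neg.max measurable_const
  have rfp : ∀ x, fp x ∈ Set.Icc (0:ℝ) 1 := fun x =>
    ⟨le_max_right _ _, max_le ((le_abs_self _).trans (hf1 x)) zero_le_one⟩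
  have rfm : ∀ x, fm x ∈ Set.Icc (0:ℝ) 1 := fun x =>
    ⟨le_max_right _ _, max_le ((neg_le_abs _).trans (hf1 x)) zero_le_one⟩
  have rgp : ∀ x, gp x ∈ Set.Icc (0:ℝ) 1 := fun x =>
    ⟨le_max_right _ _, max_le ((le_abs_self _).trans (hg1 x)) zero_le_one⟩
  have rgm : ∀ x, gm x ∈ Set.Icc (0:ℝ) 1 := fun x =>
    ⟨le_max_right _ _, max_le ((neg_le_abs _).trans (hg1 x)) zero_le_one⟩
  have a1 : ∀ x, |fp x| ≤ 1 := fun x => abs_le.2 ⟨by linarith [(rfp x).1], (rfp x).2⟩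
  have a2 : ∀ x, |fm x| ≤ 1 := fun x => abs_le.2 ⟨by linarith [(rfm x).1], (rfm x).2⟩
  have a3 : ∀ x, |gp x| ≤ 1 := fun x => abs_le.2 ⟨by linarith [(rgp x).1], (rgp x).2⟩
  have a4 : ∀ x, |gm x| ≤ 1 := fun x => abs_le.2 ⟨by linarith [(rgm x).1], (rgm x).2⟩
  have fd : ∀ t, f t = fp t - fm t := fun t => by
    simp only [hfp, hfm]
    rcases le_total (f t) 0 with h | h
    · rw [max_eq_right h, max_eq_left (by linarith)]; ring
    · rw [max_eq_left h, max_eq_right (by linarith)]; ring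
  have gd : ∀ t, g t = gp t - gm t := fun t => by
    simp only [hgp, hgm]
    rcases le_total (g t) 0 with h | h
    · rw [max_eq_right h, max_eq_left (by linarith)]; ring
    · rw [max_eq_left h, max_eq_right (by linarith)]; ring
  have innerInt : ∀ (φ ψ : ℝ → ℝ), Measurable ψ → (∀ t, |φ t| ≤ 1) → (∀ t, |ψ t| ≤ 1) →
      ∀ x, Integrable (fun y => V x y * φ x * ψ y) mu01 := fun φ ψ mψ bφ bψ x =>
    integrable_bdd (((hV.ml x).mul measurable_const).mul mψ).aestronglyMeasurable
      (c := v) (fun y => triB (hV.2 x y) (bφ x) (bψ y))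
  have Jint : ∀ (φ ψ : ℝ → ℝ), Measurable φ → Measurable ψ → (∀ t, |φ t| ≤ 1) →
      (∀ t, |ψ t| ≤ 1) →
      Integrable (fun x => ∫ y, V x y * φ x * ψ y ∂mu01) mu01 := by
    intro φ ψ mφ mψ bφ bψ
    have hF : Measurable fun p : ℝ × ℝ => V p.1 p.2 * φ p.1 * ψ p.2 :=
      (hV.1.mul (mφ.comp measurable_fst)).mul (mψ.comp measurable_snd)
    refine integrable_bdd ?_ (c := v) (fun x => abs_integral_le fun y =>
      triB (hV.2 x y) (bφ x) (bψ y))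
    exact (hF.stronglyMeasurable.integral_prod_right' (ν := mu01)).measurable.aestronglyMeasurable
  have split_f : ∀ (ψ : ℝ → ℝ), Measurable ψ → (∀ t, |ψ t| ≤ 1) →
      (∫ x, ∫ y, V x y * f x * ψ y ∂mu01 ∂mu01)
        = (∫ x, ∫ y, V x y * fp x * ψ y ∂mu01 ∂mu01)
          - ∫ x, ∫ y, V x y * fm x * ψ y ∂mu01 ∂mu01 := by
    intro ψ mψ bψ
    rw [← integral_sub (Jint fp ψ mfp mψ a1 bψ) (Jint fm ψ mfm mψ a2 bψ)]
    congr 1; funext x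
    rw [← integral_sub (innerInt fp ψ mψ a1 bψ x) (innerInt fm ψ mψ a2 bψ x)]
    congr 1; funext y
    conv_lhs => rw [fd x]
    ring
  have split_g : (∫ x, ∫ y, V x y * f x * g y ∂mu01 ∂mu01)
      = (∫ x, ∫ y, V x y * f x * gp y ∂mu01 ∂mu01)
        - ∫ x, ∫ y, V x y * f x * gm y ∂mu01 ∂mu01 := by
    rw [← integral_sub (Jint f gp hf mgp hf1 a3) (Jint f gm hf mgm hf1 a4)]
    congr 1; funext x
    rw [← integral_sub (innerInt f gp mgp hf1 a3 x) (innerInt f gm mgm hf1 a4 x)]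
    congr 1; funext y
    conv_lhs => rw [gd y]
    ring
  have bpp := le_cutNorm hV mfp mgp rfp rgp
  have bpm := le_cutNorm hV mfp mgm rfp rgm
  have bmp := le_cutNorm hV mfm mgp rfm rgp
  have bmm := le_cutNorm hV mfm mgm rfm rgm
  rw [split_g, split_f gp mgp a3, split_f gm mgm a4]
  set App := ∫ x, ∫ y, V x y * fp x * gp y ∂mu01 ∂mu01
  set Amp := ∫ x, ∫ y, V x y * fm x * gp y ∂mu01 ∂mu01
  set Apm := ∫ x, ∫ y, V x y * fp x * gm y ∂mu01 ∂mu01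
  set Amm := ∫ x, ∫ y, V x y * fm x * gm y ∂mu01 ∂mu01
  have h1 : |App - Amp - (Apm - Amm)| ≤ |App| + |Amp| + (|Apm| + |Amm|) := by
    calc |App - Amp - (Apm - Amm)| ≤ |App - Amp| + |Apm - Amm| := abs_sub _ _
      _ ≤ |App| + |Amp| + (|Apm| + |Amm|) := by
          have := abs_sub App Amp
          have := abs_sub Apm Amm
          linarith
  linarith

lemma bnd3 {v a b x1 x2 x3 : ℝ} (h1 : |x1| ≤ v) (h2 : |x2| ≤ a) (h3 : |x3| ≤ b)
    (ha : 0 ≤ a) : |x1 * (x2 * x3)| ≤ v * (a * b) := by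
  have hv : (0:ℝ) ≤ v := (abs_nonneg _).trans h1
  rw [abs_mul, abs_mul]
  exact mul_le_mul h1 (mul_le_mul h2 h3 (abs_nonneg _) ha) (by positivity) hv

/-- Core estimate: `|tr (V ∘ A ∘ B)| ≤ 4ab‖V‖_□`. -/
lemma core {v a b : ℝ} {V A B : ℝ → ℝ → ℝ} (hV : Ker v V) (hA : Ker a A) (hB : Ker b B)
    (ha : 0 < a) (hb : 0 < b) :
    |ktr (kcomp V (kcomp A B))| ≤ 4 * (a * b) * cutNorm V := by
  have step12 : ktr (kcomp V (kcomp A B))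
      = ∫ x, ∫ u, ∫ w, V x w * (A w u * B u x) ∂mu01 ∂mu01 ∂mu01 := by
    unfold ktr kcomp
    congr 1; funext x
    have e1 : (∫ w, V x w * ∫ u, A w u * B u x ∂mu01 ∂mu01)
        = ∫ w, ∫ u, V x w * (A w u * B u x) ∂mu01 ∂mu01 := by
      congr 1; funext w
      rw [← integral_const_mul]
    rw [e1]
    refine swap_int ?_ (c := v * (a * b)) (fun w u => bnd3 (hV.2 x w) (hA.2 w u) (hB.2 u x) ha.le)
    exact ((hV.ml x).comp measurable_fst).mul
      ((hA.1.comp (measurable_fst.prodMk measurable_snd)).mul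
        ((hB.mr x).comp measurable_snd))
  have step3 : (∫ x, ∫ u, ∫ w, V x w * (A w u * B u x) ∂mu01 ∂mu01 ∂mu01)
      = ∫ u, ∫ x, ∫ w, V x w * (A w u * B u x) ∂mu01 ∂mu01 ∂mu01 := by
    have hH : Measurable fun p : (ℝ × ℝ) × ℝ => V p.1.1 p.2 * (A p.2 p.1.2 * B p.1.2 p.1.1) :=
      (hV.1.comp (measurable_fst.fst.prodMk measurable_snd)).mul
        ((hA.1.comp (measurable_snd.prodMk measurable_fst.snd)).mul
          (hB.1.comp (measurable_fst.snd.prodMk measurable_fst.fst)))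
    refine swap_int ?_ (c := v * (a * b)) (fun x u => abs_integral_le fun w =>
      bnd3 (hV.2 x w) (hA.2 w u) (hB.2 u x) ha.le)
    exact (hH.stronglyMeasurable.integral_prod_right' (ν := mu01)).measurable
  rw [step12, step3]
  refine le_trans (abs_integral_le (c := (a * b) * (4 * cutNorm V)) fun u => ?_) (by ring_nf; rfl)
  have scale : (∫ x, ∫ w, V x w * (A w u * B u x) ∂mu01 ∂mu01)
      = (a * b) * ∫ x, ∫ w, V x w * (B u x / b) * (A w u / a) ∂mu01 ∂mu01 := by
    rw [← integral_const_mul]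
    congr 1; funext x
    rw [← integral_const_mul]
    congr 1; funext w
    field_simp
  rw [scale, abs_mul, abs_of_pos (by positivity : (0:ℝ) < a * b)]
  refine mul_le_mul_of_nonneg_left ?_ (by positivity)
  refine cut_bound hV ((hB.ml u).div_const b) ((hA.mr u).div_const a) (fun x => ?_) (fun w => ?_)
  · rw [abs_div, abs_of_pos hb, div_le_one hb]; exact hB.2 u x
  · rw [abs_div, abs_of_pos ha, div_le_one ha]; exact hA.2 w u

end CutAux


namespace CutAux

lemma pathComp_succ (U : ℝ → ℝ → ℝ) (j : ℕ) :
    pathComp U (j + 1) = kcomp (pathComp U j) U := rfl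

lemma Ker.path {M : ℝ} {U : ℝ → ℝ → ℝ} (h : Ker M U) (hM : 0 ≤ M) :
    ∀ j, Ker (M ^ (j + 1)) (pathComp U j) := by
  intro j
  induction j with
  | zero => simpa [pathComp] using h
  | succ j ih =>
      rw [pathComp_succ, pow_succ]
      exact ih.comp h (by positivity)

lemma pathComp_split {M : ℝ} {U : ℝ → ℝ → ℝ} (h : Ker M U) (hM : 0 ≤ M) (a b : ℕ) :
    pathComp U (a + b + 1) = kcomp (pathComp U a) (pathComp U b) := by
  induction b with
  | zero => rfl
  | succ b ih =>
      calc pathComp U (a + (b + 1) + 1)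
          = kcomp (kcomp (pathComp U a) (pathComp U b)) U := by
            rw [show a + (b + 1) + 1 = (a + b + 1) + 1 from by omega, pathComp_succ, ih]
        _ = kcomp (pathComp U a) (kcomp (pathComp U b) U) :=
            kcomp_assoc (h.path hM a) (h.path hM b) h (by positivity) (by positivity) hM
        _ = kcomp (pathComp U a) (pathComp U (b + 1)) := rfl

lemma diff_trace {a b m : ℝ} {A B X₁ X₂ : ℝ → ℝ → ℝ} (hA : Ker a A) (hB : Ker b B)
    (hX₁ : Ker m X₁) (hX₂ : Ker m X₂) (ha : 0 ≤ a) (hb : 0 ≤ b) (hm : 0 ≤ m) :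
    ktr (kcomp A (kcomp X₂ B)) - ktr (kcomp A (kcomp X₁ B))
      = ktr (kcomp (fun x y => X₂ x y - X₁ x y) (kcomp B A)) := by
  have cyc : ∀ X, Ker m X → ktr (kcomp A (kcomp X B)) = ktr (kcomp X (kcomp B A)) := by
    intro X hX
    rw [ktr_comm hA (hX.comp hB hm) ha (mul_nonneg hm hb), kcomp_assoc hX hB hA hm hb ha]
  rw [cyc X₂ hX₂, cyc X₁ hX₁]
  exact (ktr_sub hX₁ hX₂ (hB.comp hA hb) hm).symm

end CutAux



/-- For every `L ≥ 3` and `M > 0` there is a constant `C` such that for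
all symmetric measurable kernels bounded by `M` in absolute value, the traces of the
`L`-th path compositions are `C`-Lipschitz in the cut norm (here `U^{(L)} =
pathComp U (L-1)`). -/
theorem pathComp_trace_cut_lipschitz (L : ℕ) (hL : 3 ≤ L) (M : ℝ) (hM : 0 < M) :
    ∃ C : ℝ, ∀ U₁ U₂ : ℝ → ℝ → ℝ,
      Measurable (Function.uncurry U₁) → Measurable (Function.uncurry U₂) →
      (∀ x y, U₁ x y = U₁ y x) → (∀ x y, U₂ x y = U₂ y x) →
      (∀ x y, |U₁ x y| ≤ M) → (∀ x y, |U₂ x y| ≤ M) →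
      |(∫ x, pathComp U₁ (L - 1) x x ∂mu01) - ∫ x, pathComp U₂ (L - 1) x x ∂mu01|
        ≤ C * cutNorm (fun x y => U₁ x y - U₂ x y) := by
  classical
  open CutAux in
  refine ⟨(L : ℝ) * (4 * M ^ (L - 1)), ?_⟩
  intro U₁ U₂ hm1 hm2 _ _ hb1 hb2
  set n : ℕ := L - 1 with hn
  have hn2 : 2 ≤ n := by omega
  have hK1 : Ker M U₁ := ⟨hm1, hb1⟩
  have hK2 : Ker M U₂ := ⟨hm2, hb2⟩
  set V : ℝ → ℝ → ℝ := fun x y => U₁ x y - U₂ x y with hVdef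
  have hV : Ker (M + M) V := by
    constructor
    · exact hm1.sub hm2
    · intro x y
      exact (abs_sub _ _).trans (add_le_add (hb1 x y) (hb2 x y))
  have kp1 := hK1.path hM.le
  have kp2 := hK2.path hM.le
  have hcn := cutNorm_nonneg hV
  set c : ℝ := 4 * M ^ n * cutNorm V with hc
  have hc0 : 0 ≤ c := by positivity
  -- the interpolating traces
  set T : ℕ → ℝ := fun j => ktr (kcomp (pathComp U₁ j) (pathComp U₂ (n - 1 - j))) with hT
  have pow_merge : ∀ p q : ℕ, p + q = n → 4 * (M ^ p * M ^ q) * cutNorm V = c := by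
    intro p q hpq
    rw [← pow_add, hpq, hc]
  -- generic expansion: pathComp W (k+1) = kcomp W (pathComp W k)
  have expandL : ∀ (U : ℝ → ℝ → ℝ) (hU : Ker M U) (k : ℕ),
      pathComp U (k + 1) = kcomp U (pathComp U k) := by
    intro U hU k
    have := pathComp_split hU hM.le 0 k
    rwa [show 0 + k + 1 = k + 1 from by omega] at this
  -- step 0
  have hstep0 : |T 0 - ktr (pathComp U₂ n)| ≤ c := by
    have e2 : pathComp U₂ n = kcomp U₂ (pathComp U₂ (n - 1)) := by
      have := expandL U₂ hK2 (n - 1)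
      rwa [show n - 1 + 1 = n from by omega] at this
    have e0 : T 0 = ktr (kcomp U₁ (pathComp U₂ (n - 1))) := rfl
    have hdiff : T 0 - ktr (pathComp U₂ n) = ktr (kcomp V (pathComp U₂ (n - 1))) := by
      rw [e0, e2]
      exact (ktr_sub hK2 hK1 (kp2 (n - 1)) hM.le).symm
    rw [hdiff]
    have e3 : pathComp U₂ (n - 1) = kcomp U₂ (pathComp U₂ (n - 2)) := by
      have := expandL U₂ hK2 (n - 2)
      rwa [show n - 2 + 1 = n - 1 from by omega] at this
    rw [e3]
    have := core hV hK2 (kp2 (n - 2)) hM (pow_pos hM _)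
    rwa [show M * M ^ (n - 2 + 1) = M ^ 1 * M ^ (n - 1) from by
        rw [pow_one, show n - 2 + 1 = n - 1 from by omega],
      pow_merge 1 (n - 1) (by omega)] at this
  -- middle steps
  have hstepj : ∀ j : ℕ, j + 1 ≤ n - 1 → |T (j + 1) - T j| ≤ c := by
    intro j hj
    set b : ℕ := n - 2 - j with hbdef
    have eb1 : n - 1 - (j + 1) = b := by omega
    have eb2 : n - 1 - j = b + 1 := by omega
    have eT1 : T (j + 1) = ktr (kcomp (pathComp U₁ j) (kcomp U₁ (pathComp U₂ b))) := by
      show ktr (kcomp (pathComp U₁ (j + 1)) (pathComp U₂ (n - 1 - (j + 1)))) = _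
      rw [eb1, pathComp_succ,
        kcomp_assoc (kp1 j) hK1 (kp2 b) (by positivity) hM.le (by positivity)]
    have eT2 : T j = ktr (kcomp (pathComp U₁ j) (kcomp U₂ (pathComp U₂ b))) := by
      show ktr (kcomp (pathComp U₁ j) (pathComp U₂ (n - 1 - j))) = _
      rw [eb2, expandL U₂ hK2 b]
    have hdiff : T (j + 1) - T j
        = ktr (kcomp V (kcomp (pathComp U₂ b) (pathComp U₁ j))) := by
      rw [eT1, eT2]
      exact diff_trace (kp1 j) (kp2 b) hK2 hK1 (by positivity) (by positivity) hM.le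
    rw [hdiff]
    have := core hV (kp2 b) (kp1 j) (pow_pos hM _) (pow_pos hM _)
    rwa [pow_merge (b + 1) (j + 1) (by omega)] at this
  -- last step
  have hstepn : |ktr (pathComp U₁ n) - T (n - 1)| ≤ c := by
    have eT : T (n - 1) = ktr (kcomp U₂ (pathComp U₁ (n - 1))) := by
      show ktr (kcomp (pathComp U₁ (n - 1)) (pathComp U₂ (n - 1 - (n - 1)))) = _
      rw [show n - 1 - (n - 1) = 0 from by omega]
      exact ktr_comm (kp1 (n - 1)) hK2 (by positivity) hM.le
    have e1 : ktr (pathComp U₁ n) = ktr (kcomp U₁ (pathComp U₁ (n - 1))) := by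
      have := expandL U₁ hK1 (n - 1)
      rw [show n - 1 + 1 = n from by omega] at this
      rw [this]
    have hdiff : ktr (pathComp U₁ n) - T (n - 1) = ktr (kcomp V (pathComp U₁ (n - 1))) := by
      rw [e1, eT]
      exact (ktr_sub hK2 hK1 (kp1 (n - 1)) hM.le).symm
    rw [hdiff]
    have e3 : pathComp U₁ (n - 1) = kcomp U₁ (pathComp U₁ (n - 2)) := by
      have := expandL U₁ hK1 (n - 2)
      rwa [show n - 2 + 1 = n - 1 from by omega] at this
    rw [e3]
    have := core hV hK1 (kp1 (n - 2)) hM (pow_pos hM _)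
    rwa [show M * M ^ (n - 2 + 1) = M ^ 1 * M ^ (n - 1) from by
        rw [pow_one, show n - 2 + 1 = n - 1 from by omega],
      pow_merge 1 (n - 1) (by omega)] at this
  -- telescoping
  have htel : ∀ k : ℕ, k ≤ n - 1 → |T k - ktr (pathComp U₂ n)| ≤ ((k : ℝ) + 1) * c := by
    intro k
    induction k with
    | zero => intro _; simpa using hstep0
    | succ k ih =>
        intro hk
        have h1 := hstepj k (by omega)
        have h2 := ih (by omega)
        have := abs_sub_le (T (k + 1)) (T k) (ktr (pathComp U₂ n))
        push_cast
        nlinarith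
  have hfinal := htel (n - 1) le_rfl
  have hcast : ((n - 1 : ℕ) : ℝ) + 1 = (n : ℝ) := by
    have : n - 1 + 1 = n := by omega
    exact_mod_cast congrArg (Nat.cast : ℕ → ℝ) this
  rw [hcast] at hfinal
  have hmain : |ktr (pathComp U₁ n) - ktr (pathComp U₂ n)| ≤ ((n : ℝ) + 1) * c := by
    have := abs_sub_le (ktr (pathComp U₁ n)) (T (n - 1)) (ktr (pathComp U₂ n))
    nlinarith
  have hLn : ((L : ℝ)) = (n : ℝ) + 1 := by
    have : L = n + 1 := by omega
    exact_mod_cast congrArg (Nat.cast : ℕ → ℝ) this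
  calc |(∫ x, pathComp U₁ (L - 1) x x ∂mu01) - ∫ x, pathComp U₂ (L - 1) x x ∂mu01|
      = |ktr (pathComp U₁ n) - ktr (pathComp U₂ n)| := rfl
    _ ≤ ((n : ℝ) + 1) * c := hmain
    _ = (L : ℝ) * (4 * M ^ (L - 1)) * cutNorm V := by rw [hLn, hc, hn]; ring
end
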